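/- arXiv:math/9808017 — 3 statements merged into one kernel-verified Lean document; each statement's English description precedes it below -/
import Mathlib

section
/- Let B_{m,n}(x) = 2^{-mn-m(m-1)/2} (x+n+1)_m (x+n+2)_m · [(x+2)(x+3)^2···(x+n-1)^2(x+n)] · [(x+3/2)(x+5/2)^2···(x+(2n-1)/2)^2(x+(2n+1)/2)] · ∏_{i=1}^n (x+i)_m/(x+i+1/2)_m · ∏_{i=1}^m (2x+n+i+2)_{n+i-1}. Then for m ≥ 0 and n ≥ 1, B_{m,n}(x)/B_{m,n-1}(x) = 2^{-(m+n)} (2x+m+n+2)_{m+n} · ∏_{i=0}^{m-1} (x+m+n-i+1)/(x+m+n-i+1/2), as an identity of rational functions in x. -/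
/-- The rising factorial `(a)_j = a(a+1)···(a+j-1)`. -/
noncomputable def rfac {K : Type*} [Field K] (a : K) (j : ℕ) : K :=
  ∏ i ∈ Finset.range j, (a + i)

/-- The product `(x+2)(x+3)^2···(x+n-1)^2(x+n)`, whose bases grow by one from
factor to factor while the exponents increase by one up to the middle and then
decrease by one (empty for `n ≤ 1`). -/
noncomputable def tentInt {K : Type*} [Field K] (x : K) (n : ℕ) : K :=
  ∏ j ∈ Finset.Icc 2 n, (x + j) ^ (min (j - 1) (n + 1 - j))

/-- The product `(x+3/2)(x+5/2)^2···(x+(2n-1)/2)^2(x+(2n+1)/2)`, bases growing by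
one, exponents rising by one to the middle and then falling (empty for `n = 0`). -/
noncomputable def tentHalf {K : Type*} [Field K] (x : K) (n : ℕ) : K :=
  ∏ j ∈ Finset.Icc 1 n, (x + j + 1 / 2) ^ (min j (n + 1 - j))

/-- The product `(x+1)(x+2)^2···(x+m-1)^2(x+m)`, bases growing by one, exponents
rising by one to the middle and then falling (empty for `m = 0`). -/
noncomputable def tentIntBar {K : Type*} [Field K] (x : K) (m : ℕ) : K :=
  ∏ j ∈ Finset.Icc 1 m, (x + j) ^ (min j (m + 1 - j))

/-- The product `(x+3/2)(x+5/2)^2···(x+(2m-3)/2)^2(x+(2m-1)/2)`, bases growing by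
one, exponents rising by one to the middle and then falling (empty for `m ≤ 1`). -/
noncomputable def tentHalfBar {K : Type*} [Field K] (x : K) (m : ℕ) : K :=
  ∏ j ∈ Finset.Icc 1 (m - 1), (x + j + 1 / 2) ^ (min j (m - j))

/-- The polynomial `B_{m,n}(x)` of formula (1.1). -/
noncomputable def Bpoly {K : Type*} [Field K] (m n : ℕ) (x : K) : K :=
  ((2 : K) ^ (m * n + m * (m - 1) / 2))⁻¹ *
    rfac (x + n + 1) m * rfac (x + n + 2) m *
    tentInt x n * tentHalf x n *
    (∏ i ∈ Finset.Icc 1 n, rfac (x + i) m / rfac (x + i + 1 / 2) m) *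
    (∏ i ∈ Finset.Icc 1 m, rfac (2 * x + n + i + 2) (n + i - 1))

/-- The polynomial `B̄_{m,n}(x)` of formula (1.2). -/
noncomputable def Bbar {K : Type*} [Field K] (m n : ℕ) (x : K) : K :=
  ((2 : K) ^ (m * n + n * (n + 1) / 2))⁻¹ *
    rfac (x + m + 1) n *
    tentIntBar x m * tentHalfBar x m *
    (∏ i ∈ Finset.Icc 1 m, rfac (x + i) n / rfac (x + i + 1 / 2) n) *
    (∏ i ∈ Finset.Icc 1 n, rfac (2 * x + m + i + 1) (m + i))


/-!
Compare `B_{m,n+1}` with `B_{m,n}` factor by factor. The two tent products gain the factors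
`(x + ⌊(n+4)/2⌋)_{⌊(n+1)/2⌋}` and `(x + ⌊(n+3)/2⌋ + 1/2)_{⌊(n+2)/2⌋}`, which by the duplication
formula `(2a)_{2r} = 4^r (a)_r (a+1/2)_r` interleave to `2^{-(n+1)} (2x+n+3)_{n+1}`; the last
product gains `(2x+2n+3)_{2m} / (2x+n+3)_m`. One more duplication and `(a)_{i+j} = (a)_i (a+i)_j`
collapse the resulting quotient to the stated one. Over `ℚ(X)` no factor vanishes, since `X`
is not a rational number.
-/

open Finset

section RisingFactorial

variable {K : Type*} [Field K]

lemma rfac_succ (a : K) (j : ℕ) : rfac a (j + 1) = rfac a j * (a + j) :=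
  prod_range_succ _ _

lemma rfac_add (a : K) (i j : ℕ) : rfac a (i + j) = rfac a i * rfac (a + i) j := by
  unfold rfac
  rw [prod_range_add]
  push_cast
  simp only [add_assoc]

lemma rfac_succ' (a : K) (j : ℕ) : rfac a (j + 1) = a * rfac (a + 1) j := by
  rw [add_comm, rfac_add, Nat.cast_one]
  simp [rfac]

lemma prod_range_add_sub (a : K) (j : ℕ) : ∏ i ∈ range j, (a + j - i) = rfac (a + 1) j := by
  unfold rfac
  rw [← prod_range_reflect]
  refine prod_congr rfl fun i hi => ?_
  rw [Nat.cast_sub (by simp at hi; omega), Nat.cast_sub (by simp at hi; omega)]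
  push_cast
  ring

lemma rfac_two_mul [NeZero (2 : K)] (a : K) (r : ℕ) :
    rfac (2 * a) (2 * r) = 2 ^ (2 * r) * rfac a r * rfac (a + 1 / 2) r := by
  induction r with
  | zero => simp [rfac]
  | succ r ih =>
    rw [show 2 * (r + 1) = 2 * r + 1 + 1 by ring, rfac_succ, rfac_succ, ih, rfac_succ,
      rfac_succ]
    field_simp
    push_cast
    ring

end RisingFactorial

section Tent

variable {M : Type*} [CommMonoid M]

def tent (f : ℕ → M) (n : ℕ) : M :=
  ∏ j ∈ Icc 1 n, f j ^ min j (n + 1 - j)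

lemma tent_succ (f : ℕ → M) (n : ℕ) :
    tent f (n + 1) = tent f n * ∏ i ∈ range ((n + 2) / 2), f ((n + 3) / 2 + i) := by
  have hexp : ∀ j ∈ Icc 1 (n + 1), f j ^ min j (n + 1 + 1 - j) =
      f j ^ min j (n + 1 - j) * if j ∈ Ico ((n + 3) / 2) (n + 2) then f j else 1 := by
    intro j hj
    simp only [mem_Icc, mem_Ico] at hj ⊢
    split_ifs with h
    · rw [← pow_succ]; congr 1; omega
    · rw [mul_one]; congr 1; omega
  have hIco : Icc 1 (n + 1) ∩ Ico ((n + 3) / 2) (n + 2) = Ico ((n + 3) / 2) (n + 2) := by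
    ext j; simp only [mem_inter, mem_Icc, mem_Ico]; omega
  unfold tent
  rw [prod_congr rfl hexp, prod_mul_distrib, prod_Icc_succ_top (by omega), prod_ite_mem, hIco,
    prod_Ico_eq_prod_range, show n + 2 - (n + 3) / 2 = (n + 2) / 2 by omega]
  simp

end Tent

section BpolyStep

variable {K : Type*} [Field K]

lemma tentInt_succ_eq_tent (x : K) (n : ℕ) :
    tentInt x (n + 1) = tent (fun j => x + (j + 1 : ℕ)) n := by
  unfold tentInt tent
  rw [← map_add_right_Icc 1 n 1, prod_map]
  refine prod_congr rfl fun j _ => ?_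
  simp only [addRightEmbedding_apply]
  congr 2; omega

lemma tentInt_succ (x : K) (n : ℕ) :
    tentInt x (n + 1) = tentInt x n * rfac (x + ((n + 4) / 2 : ℕ)) ((n + 1) / 2) := by
  rcases n with _ | n
  · simp [tentInt, rfac]
  rw [tentInt_succ_eq_tent, tentInt_succ_eq_tent, tent_succ, rfac,
    show (n + 1 + 4) / 2 = (n + 3) / 2 + 1 by omega]
  congr 1
  refine prod_congr rfl fun i _ => ?_
  push_cast
  ring

lemma tentHalf_succ (x : K) (n : ℕ) :
    tentHalf x (n + 1) = tentHalf x n * rfac (x + ((n + 3) / 2 : ℕ) + 1 / 2) ((n + 2) / 2) := by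
  rw [tentHalf, tentHalf, ← tent, ← tent, tent_succ, rfac]
  congr 1
  refine prod_congr rfl fun i _ => ?_
  push_cast
  ring

lemma tentInt_mul_tentHalf_succ [NeZero (2 : K)] (x : K) (n : ℕ) :
    2 ^ (n + 1) * (tentInt x (n + 1) * tentHalf x (n + 1)) =
      tentInt x n * tentHalf x n * rfac (2 * x + n + 3) (n + 1) := by
  rw [tentInt_succ, tentHalf_succ]
  obtain ⟨p, rfl | rfl⟩ := Nat.even_or_odd' n
  · rw [show (2 * p + 4) / 2 = p + 2 by omega, show (2 * p + 1) / 2 = p by omega,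
      show (2 * p + 3) / 2 = p + 1 by omega, show (2 * p + 2) / 2 = p + 1 by omega,
      rfac_succ', rfac_succ', show 2 * x + ↑(2 * p) + 3 + 1 = 2 * (x + ↑(p + 2)) by push_cast; ring,
      rfac_two_mul, show x + ↑(p + 1) + 1 / 2 + 1 = x + ↑(p + 2) + 1 / 2 by push_cast; ring]
    have hdouble : 2 * (x + ↑(p + 1) + 1 / 2) = 2 * x + ↑(2 * p) + 3 := by
      field_simp; push_cast; ring
    rw [← hdouble, pow_succ]
    ring
  · rw [show (2 * p + 1 + 4) / 2 = p + 2 by omega, show (2 * p + 1 + 1) / 2 = p + 1 by omega,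
      show (2 * p + 1 + 3) / 2 = p + 2 by omega, show (2 * p + 1 + 2) / 2 = p + 1 by omega,
      show 2 * x + ↑(2 * p + 1) + 3 = 2 * (x + ↑(p + 2)) by push_cast; ring,
      show 2 * p + 1 + 1 = 2 * (p + 1) by ring, rfac_two_mul]
    ring

lemma mul_rfac_add_one_succ (a : K) (j : ℕ) :
    a * rfac (a + 1) (j + 1) = rfac a j * (a + j) * (a + (j + 1 : ℕ)) := by
  rw [← rfac_succ', rfac_succ, rfac_succ]

lemma prod_rfac_succ_mul (y : K) (m n : ℕ) :
    (∏ i ∈ Icc 1 m, rfac (y + ↑(n + 1) + ↑i + 2) (n + 1 + i - 1)) * rfac (y + n + 3) m =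
      (∏ i ∈ Icc 1 m, rfac (y + n + i + 2) (n + i - 1)) * rfac (y + 2 * n + 3) (2 * m) := by
  induction m with
  | zero => simp [rfac]
  | succ m ih =>
    set a : K := y + n + m + 3
    have key := mul_rfac_add_one_succ a (n + m)
    rw [prod_Icc_succ_top (by omega), prod_Icc_succ_top (by omega), rfac_succ,
      show 2 * (m + 1) = 2 * m + 1 + 1 by ring, rfac_succ, rfac_succ,
      show y + ↑(n + 1) + ↑(m + 1) + 2 = a + 1 by push_cast; ring,
      show y + ↑n + ↑(m + 1) + 2 = a by push_cast; ring,
      show n + 1 + (m + 1) - 1 = n + m + 1 by omega, show n + (m + 1) - 1 = n + m by omega]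
    rw [show y + 2 * n + 3 + ↑(2 * m) = a + ↑(n + m) by push_cast; ring,
      show y + 2 * n + 3 + ↑(2 * m + 1) = a + ↑(n + m + 1) by push_cast; ring,
      show y + n + 3 + m = a by ring]
    linear_combination (rfac (a + 1) (n + m + 1) * a) * ih +
      (∏ i ∈ Icc 1 m, rfac (y + n + i + 2) (n + i - 1)) * rfac (y + 2 * n + 3) (2 * m) * key

lemma Bpoly_succ [NeZero (2 : K)] (x : K) (m n : ℕ) (h : rfac (2 * x + n + 3) m ≠ 0) :
    Bpoly m (n + 1) x = Bpoly m n x *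
      ((2 ^ (m + n + 1))⁻¹ * rfac (x + n + 3) m / rfac (x + n + 1 + 1 / 2) m *
        rfac (2 * x + n + 3) (n + 1) * rfac (2 * x + 2 * n + 3) (2 * m) /
          rfac (2 * x + n + 3) m) := by
  have hT : tentInt x (n + 1) * tentHalf x (n + 1) =
      tentInt x n * tentHalf x n * ((2 ^ (n + 1))⁻¹ * rfac (2 * x + n + 3) (n + 1)) := by
    field_simp
    linear_combination tentInt_mul_tentHalf_succ x n
  have hW := eq_div_of_mul_eq h (prod_rfac_succ_mul (2 * x) m n)
  unfold Bpoly
  rw [mul_assoc _ (tentInt x (n + 1)), hT, hW, prod_Icc_succ_top (by omega),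
    show x + ↑(n + 1) + 1 = x + n + 2 by push_cast; ring,
    show x + ↑(n + 1) + 2 = x + n + 3 by push_cast; ring,
    show x + ↑(n + 1) + 1 / 2 = x + n + 1 + 1 / 2 by push_cast; ring,
    show x + ↑(n + 1) = x + n + 1 by push_cast; ring]
  ring

lemma prod_range_ratio_eq (x : K) (m n : ℕ) :
    ∏ i ∈ range m, (x + m + ↑(n + 1) - i + 1) / (x + m + ↑(n + 1) - i + 1 / 2) =
      rfac (x + n + 3) m / rfac (x + n + 2 + 1 / 2) m := by
  rw [prod_div_distrib, show x + ↑n + 3 = x + n + 2 + 1 by ring,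
    show x + ↑n + 2 + 1 / 2 = x + n + 1 + 1 / 2 + 1 by ring, ← prod_range_add_sub,
    ← prod_range_add_sub]
  congr 1 <;> exact prod_congr rfl fun i _ => by push_cast; ring

end BpolyStep

section NonVanishing

variable {K : Type*} [Field K] [CharZero K] {x : K}

lemma rfac_ne_zero_of_eq_add (hx : ∀ q : ℚ, x + q ≠ 0) {a : K} (q : ℚ) (ha : a = x + q)
    (j : ℕ) : rfac a j ≠ 0 :=
  prod_ne_zero_iff.2 fun i _ => by simpa [ha, add_assoc] using hx (q + i)

lemma rfac_ne_zero_of_eq_two_mul_add (hx : ∀ q : ℚ, x + q ≠ 0) {a : K} (q : ℚ)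
    (ha : a = 2 * x + q) (j : ℕ) : rfac a j ≠ 0 :=
  prod_ne_zero_iff.2 fun i _ => by
    rw [show a + i = 2 * (x + ((q + i) / 2 : ℚ)) by rw [ha]; push_cast; ring]
    exact mul_ne_zero two_ne_zero (hx _)

lemma Bpoly_ne_zero (hx : ∀ q : ℚ, x + q ≠ 0) (m n : ℕ) : Bpoly m n x ≠ 0 := by
  unfold Bpoly tentInt tentHalf
  refine mul_ne_zero (mul_ne_zero (mul_ne_zero (mul_ne_zero (mul_ne_zero (mul_ne_zero
    (by simp) ?_) ?_) ?_) ?_) ?_) ?_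
  · exact rfac_ne_zero_of_eq_add hx (n + 1) (by push_cast; ring) m
  · exact rfac_ne_zero_of_eq_add hx (n + 2) (by push_cast; ring) m
  · exact prod_ne_zero_iff.2 fun j _ => pow_ne_zero _ (by simpa using hx j)
  · exact prod_ne_zero_iff.2 fun j _ => pow_ne_zero _ (by simpa [add_assoc] using hx (j + 1 / 2))
  · exact prod_ne_zero_iff.2 fun i _ => div_ne_zero
      (rfac_ne_zero_of_eq_add hx i (by push_cast; ring) m)
      (rfac_ne_zero_of_eq_add hx (i + 1 / 2) (by push_cast; ring) m)
  · exact prod_ne_zero_iff.2 fun i _ =>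
      rfac_ne_zero_of_eq_two_mul_add hx (n + i + 2) (by push_cast; ring) _

theorem Bpoly_succ_div (hx : ∀ q : ℚ, x + q ≠ 0) (m n : ℕ) :
    Bpoly m (n + 1) x / Bpoly m n x =
      (2 ^ (m + (n + 1)))⁻¹ * rfac (2 * x + m + ↑(n + 1) + 2) (m + (n + 1)) *
        ∏ i ∈ range m, (x + m + ↑(n + 1) - i + 1) / (x + m + ↑(n + 1) - i + 1 / 2) := by
  have hP₁ : rfac (x + n + 1 + 1 / 2) m ≠ 0 :=
    rfac_ne_zero_of_eq_add hx (n + 3 / 2) (by push_cast; ring) m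
  have hP₂ : rfac (x + n + 2 + 1 / 2) m ≠ 0 :=
    rfac_ne_zero_of_eq_add hx (n + 5 / 2) (by push_cast; ring) m
  have hW : rfac (2 * x + n + 3) m ≠ 0 :=
    rfac_ne_zero_of_eq_two_mul_add hx (n + 3) (by push_cast; ring) m
  have hdup₁ : rfac (2 * x + 2 * n + 3) (2 * m) =
      2 ^ (2 * m) * rfac (x + n + 1 + 1 / 2) m * rfac (x + n + 2) m := by
    rw [show 2 * x + 2 * n + 3 = 2 * (x + n + 1 + 1 / 2) by ring, rfac_two_mul]
    ring_nf
  have hdup₂ : rfac (2 * x + 2 * n + 4) (2 * m) =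
      2 ^ (2 * m) * rfac (x + n + 2) m * rfac (x + n + 2 + 1 / 2) m := by
    rw [show 2 * x + 2 * n + 4 = 2 * (x + n + 2) by ring, rfac_two_mul]
  have hadd : rfac (2 * x + n + 3) (n + 1) * rfac (2 * x + 2 * n + 4) (2 * m) =
      rfac (2 * x + n + 3) m * rfac (2 * x + m + ↑(n + 1) + 2) (m + (n + 1)) := by
    rw [show 2 * x + 2 * n + 4 = 2 * x + n + 3 + ↑(n + 1) by push_cast; ring, ← rfac_add,
      show n + 1 + 2 * m = m + (m + (n + 1)) by ring, rfac_add,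
      show 2 * x + n + 3 + m = 2 * x + m + ↑(n + 1) + 2 by push_cast; ring]
  rw [Bpoly_succ x m n hW, mul_div_cancel_left₀ _ (Bpoly_ne_zero hx m n), prod_range_ratio_eq,
    hdup₁]
  -- `field_simp` would otherwise also normalise the arguments of `rfac`
  set P₁ := rfac (x + n + 1 + 1 / 2) m
  set P₂ := rfac (x + n + 2 + 1 / 2) m
  set W := rfac (2 * x + n + 3) m
  set R := rfac (2 * x + n + 3) (n + 1)
  set S := rfac (2 * x + m + ↑(n + 1) + 2) (m + (n + 1))
  field_simp
  linear_combination (2 ^ (m + n + 1) * rfac (x + n + 3) m) * (hadd - R * hdup₂)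

end NonVanishing

lemma RatFunc.X_add_ratCast_ne_zero (q : ℚ) : (RatFunc.X : RatFunc ℚ) + q ≠ 0 := by
  rw [← eq_ratCast ((algebraMap (Polynomial ℚ) (RatFunc ℚ)).comp Polynomial.C) q,
    RingHom.comp_apply, ← RatFunc.algebraMap_X, ← map_add]
  exact RatFunc.algebraMap_ne_zero (Polynomial.X_add_C_ne_zero q)

/-- Identity (5.6): for `n ≥ 1`,
`B_{m,n}(x)/B_{m,n-1}(x) = 2^{-(m+n)} (2x+m+n+2)_{m+n} ∏_{i=0}^{m-1} (x+m+n-i+1)/(x+m+n-i+1/2)`,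
as rational functions in `x`. -/
theorem B_ratio_n (m n : ℕ) (hn : 1 ≤ n) :
    Bpoly m n (RatFunc.X : RatFunc ℚ) / Bpoly m (n - 1) (RatFunc.X : RatFunc ℚ) =
      ((2 : RatFunc ℚ) ^ (m + n))⁻¹ *
        rfac (2 * (RatFunc.X : RatFunc ℚ) + m + n + 2) (m + n) *
        ∏ i ∈ Finset.range m,
          ((RatFunc.X : RatFunc ℚ) + m + n - i + 1) /
            ((RatFunc.X : RatFunc ℚ) + m + n - i + 1 / 2) := by
  obtain ⟨n, rfl⟩ := Nat.exists_eq_add_of_le' hn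
  exact Bpoly_succ_div RatFunc.X_add_ratCast_ne_zero m n
end

section
/- Partial fraction identity (Lemma 5.1, case m = n): Let n ≥ 1 and let l_1 < ... < l_n and q_1 < ... < q_n be strictly increasing positive integers. Then, as rational functions in x, [(2q_n)!/(2q_n-1)!] · [∏_{i=1}^{n-1}(q_n-q_i) / ∏_{i=1}^{n}(l_i+q_n)] · [1/(2x+2l_n+2)] · [∏_{i=1}^n (x+l_n+l_i+1)] / [∏_{i=1}^n (x+l_n-q_i+1)] = Σ_{k=1}^{n} (-1)^{n-k} α_k / (x+l_n-q_k+1) + (−1)^n·β'/(x+l_n+1), where α_k = [(2q_k-1)!/(2q_n-1)!]·[(2q_n)!/(2q_k)!]·[∏_{i=1}^n (l_i+q_k)/(l_i+q_n)]·[∏_{i=1,i≠k}^{n-1}(q_n-q_i)]/[∏_{i=1}^{k-1}(q_k-q_i)·∏_{i=k+1}^{n-1}(q_i-q_k)] and β' = [l_1···l_n/(q_1···q_{n-1})]·[∏_{i=1}^{n-1}(q_n-q_i)/∏_{i=1}^n (l_i+q_n)]. -/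
/-- The coefficient `α_k` of the partial fraction identity (5.13) in the case `m = n`:
`α_k = [(2q_k-1)!/(2q_n-1)!]·[(2q_n)!/(2q_k)!]·∏_{i=1}^n (l_i+q_k)/(l_i+q_n)
  ·∏_{i=1,i≠k}^{n-1}(q_n-q_i) / (∏_{i=1}^{k-1}(q_k-q_i)·∏_{i=k+1}^{n-1}(q_i-q_k))`. -/
noncomputable def alphaCoeff (l q : ℕ → ℕ) (n k : ℕ) : RatFunc ℚ :=
  ((Nat.factorial (2 * q k - 1) : RatFunc ℚ) / (Nat.factorial (2 * q n - 1) : RatFunc ℚ)) *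
    ((Nat.factorial (2 * q n) : RatFunc ℚ) / (Nat.factorial (2 * q k) : RatFunc ℚ)) *
    (∏ i ∈ Finset.Icc 1 n, ((l i : RatFunc ℚ) + q k) / ((l i : RatFunc ℚ) + q n)) *
    (∏ i ∈ (Finset.Icc 1 (n - 1)).erase k, ((q n : RatFunc ℚ) - q i)) /
    ((∏ i ∈ Finset.Icc 1 (k - 1), ((q k : RatFunc ℚ) - q i)) *
      ∏ i ∈ Finset.Icc (k + 1) (n - 1), ((q i : RatFunc ℚ) - q k))

/-- The coefficient `β' = [l_1···l_n/(q_1···q_{n-1})]·∏_{i<n}(q_n-q_i)/∏_i(l_i+q_n)`. -/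
noncomputable def betaCoeff (l q : ℕ → ℕ) (n : ℕ) : RatFunc ℚ :=
  ((∏ i ∈ Finset.Icc 1 n, (l i : RatFunc ℚ)) /
      (∏ i ∈ Finset.Icc 1 (n - 1), (q i : RatFunc ℚ))) *
    ((∏ i ∈ Finset.Icc 1 (n - 1), ((q n : RatFunc ℚ) - q i)) /
      (∏ i ∈ Finset.Icc 1 n, ((l i : RatFunc ℚ) + q n)))

open Finset

lemma qlt' (n : ℕ) (q : ℕ → ℕ) (hqmono : ∀ i, 1 ≤ i → i < n → q i < q (i + 1)) :
    ∀ i j, 1 ≤ i → i < j → j ≤ n → q i < q j := by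
  intro i j h1 hij hjn
  induction j with
  | zero => omega
  | succ m ih =>
    rcases Nat.lt_or_ge i m with h | h
    · exact lt_trans (ih h (by omega)) (hqmono m (by omega) (by omega))
    · have : i = m := by omega
      subst this; exact hqmono i h1 (by omega)

lemma erase_split (n k : ℕ) (hk1 : 1 ≤ k) (hkn : k ≤ n) (f : ℕ → ℚ) :
    ∏ i ∈ (Icc 1 n).erase k, f i =
      (∏ i ∈ Icc 1 (k - 1), f i) * ∏ i ∈ Icc (k + 1) n, f i := by
  rw [← Finset.prod_union (by
    rw [Finset.disjoint_left]; intro a ha hb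
    simp only [mem_Icc] at ha hb; omega)]
  apply Finset.prod_congr _ (fun _ _ => rfl)
  ext a
  simp only [mem_erase, mem_Icc, mem_union]
  omega

lemma prod_neg_shift (k n : ℕ) (g : ℕ → ℚ) :
    ∏ i ∈ Icc (k + 1) n, (-(g i)) = (-1 : ℚ) ^ (n - k) * ∏ i ∈ Icc (k + 1) n, g i := by
  rw [show (fun i => -(g i)) = fun i => (-1 : ℚ) * g i by funext i; ring]
  rw [Finset.prod_mul_distrib, Finset.prod_const, Nat.card_Icc]
  congr 2
  omega

noncomputable def alphaQ (l q : ℕ → ℕ) (n k : ℕ) : ℚ :=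
  ((Nat.factorial (2 * q k - 1) : ℚ) / (Nat.factorial (2 * q n - 1) : ℚ)) *
    ((Nat.factorial (2 * q n) : ℚ) / (Nat.factorial (2 * q k) : ℚ)) *
    (∏ i ∈ Finset.Icc 1 n, ((l i : ℚ) + q k) / ((l i : ℚ) + q n)) *
    (∏ i ∈ (Finset.Icc 1 (n - 1)).erase k, ((q n : ℚ) - q i)) /
    ((∏ i ∈ Finset.Icc 1 (k - 1), ((q k : ℚ) - q i)) *
      ∏ i ∈ Finset.Icc (k + 1) (n - 1), ((q i : ℚ) - q k))

noncomputable def betaQ (l q : ℕ → ℕ) (n : ℕ) : ℚ :=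
  ((∏ i ∈ Finset.Icc 1 n, (l i : ℚ)) /
      (∏ i ∈ Finset.Icc 1 (n - 1), (q i : ℚ))) *
    ((∏ i ∈ Finset.Icc 1 (n - 1), ((q n : ℚ) - q i)) /
      (∏ i ∈ Finset.Icc 1 n, ((l i : ℚ) + q n)))

lemma fact_ratio (a b : ℕ) (ha : 1 ≤ a) (hb : 1 ≤ b) :
    (((2 * a - 1).factorial : ℚ) / ((2 * b - 1).factorial)) *
      (((2 * b).factorial : ℚ) / ((2 * a).factorial)) = (b : ℚ) / a := by
  have h2a : ((2 * a).factorial : ℚ) = (2 * a) * ((2 * a - 1).factorial : ℚ) := by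
    push_cast [← Nat.mul_factorial_pred (show 2*a ≠ 0 by omega)]
    ring
  have h2b : ((2 * b).factorial : ℚ) = (2 * b) * ((2 * b - 1).factorial : ℚ) := by
    push_cast [← Nat.mul_factorial_pred (show 2*b ≠ 0 by omega)]
    ring
  rw [h2a, h2b]
  have f1 : (((2 * a - 1).factorial : ℚ)) ≠ 0 := Nat.cast_ne_zero.mpr (Nat.factorial_ne_zero _)
  have f2 : (((2 * b - 1).factorial : ℚ)) ≠ 0 := Nat.cast_ne_zero.mpr (Nat.factorial_ne_zero _)
  have ha' : (a : ℚ) ≠ 0 := Nat.cast_ne_zero.mpr (by omega)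
  have hb' : (b : ℚ) ≠ 0 := Nat.cast_ne_zero.mpr (by omega)
  field_simp

lemma key_eval (n k : ℕ) (l q : ℕ → ℕ) (hn : 1 ≤ n) (hk1 : 1 ≤ k) (hkn : k ≤ n)
    (hmono : ∀ i j, 1 ≤ i → i < j → j ≤ n → q i < q j)
    (hqpos : ∀ i, 1 ≤ i → i ≤ n → 1 ≤ q i)
    (hlqpos : ∀ i, 1 ≤ i → i ≤ n → 1 ≤ l i) :
    ((-1 : ℚ) ^ (n - k) * alphaQ l q n k) *
      ((q k : ℚ) * ∏ i ∈ (Finset.Icc 1 n).erase k, ((q k : ℚ) - q i)) =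
    ((q n : ℚ) * (∏ i ∈ Finset.Icc 1 (n - 1), ((q n : ℚ) - q i)) /
        ∏ i ∈ Finset.Icc 1 n, ((l i : ℚ) + q n)) *
      ∏ i ∈ Finset.Icc 1 n, ((q k : ℚ) + l i) := by
  have hLk : ∏ i ∈ Finset.Icc 1 n, ((q k : ℚ) + l i)
      = ∏ i ∈ Finset.Icc 1 n, ((l i : ℚ) + q k) :=
    Finset.prod_congr rfl (fun i _ => by ring)
  rw [hLk, alphaQ, fact_ratio (q k) (q n) (hqpos k hk1 hkn) (hqpos n hn le_rfl),
    Finset.prod_div_distrib]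
  -- abbreviations
  set Pa := ∏ i ∈ Finset.Icc 1 (k - 1), ((q k : ℚ) - q i) with hPa
  set Pb := ∏ i ∈ Finset.Icc (k + 1) (n - 1), ((q i : ℚ) - q k) with hPb
  set Pc := ∏ i ∈ Finset.Icc (k + 1) n, ((q i : ℚ) - q k) with hPc
  set R := ∏ i ∈ (Finset.Icc 1 (n - 1)).erase k, ((q n : ℚ) - q i) with hR
  set F := ∏ i ∈ Finset.Icc 1 (n - 1), ((q n : ℚ) - q i) with hF
  set Lk := ∏ i ∈ Finset.Icc 1 n, ((l i : ℚ) + q k) with hLk2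
  set Ln := ∏ i ∈ Finset.Icc 1 n, ((l i : ℚ) + q n) with hLn
  -- split the erase-product
  have hE : ∏ i ∈ (Finset.Icc 1 n).erase k, ((q k : ℚ) - q i)
      = Pa * ((-1 : ℚ) ^ (n - k) * Pc) := by
    rw [erase_split n k hk1 hkn, hPa, hPc]
    congr 1
    rw [← prod_neg_shift k n (fun i => (q i : ℚ) - q k)]
    exact Finset.prod_congr rfl (fun i _ => by ring)
  -- R * Pc = F * Pb
  have hRC : R * Pc = F * Pb := by
    rcases Nat.lt_or_ge k n with hlt | hge
    · have hPcEq : Pc = Pb * ((q n : ℚ) - q k) := by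
        rw [hPc, hPb, show n = (n - 1) + 1 by omega, Finset.prod_Icc_succ_top (by omega)]
        congr 2 <;> omega
      have hFEq : F = ((q n : ℚ) - q k) * R := by
        rw [hF, hR, ← Finset.mul_prod_erase _ _ (Finset.mem_Icc.mpr ⟨hk1, by omega⟩)]
      rw [hPcEq, hFEq]; ring
    · have hkn' : k = n := le_antisymm hkn hge
      subst hkn'
      have h1 : R = F := by
        rw [hR, hF, Finset.erase_eq_of_notMem (by simp [Finset.mem_Icc]; omega)]
      have h2 : Pc = 1 := by rw [hPc, Finset.Icc_eq_empty (by omega), Finset.prod_empty]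
      have h3 : Pb = 1 := by rw [hPb, Finset.Icc_eq_empty (by omega), Finset.prod_empty]
      rw [h1, h2, h3]
  -- nonvanishing
  have hqk0 : (q k : ℚ) ≠ 0 := Nat.cast_ne_zero.mpr (by have := hqpos k hk1 hkn; omega)
  have hPa0 : Pa ≠ 0 := by
    rw [hPa]
    refine Finset.prod_ne_zero_iff.mpr (fun i hi => ?_)
    rw [Finset.mem_Icc] at hi
    have h1 := hmono i k hi.1 (by omega) hkn
    have h2 : (q i : ℚ) < q k := by exact_mod_cast h1
    intro h; linarith
  have hPb0 : Pb ≠ 0 := by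
    rw [hPb]
    refine Finset.prod_ne_zero_iff.mpr (fun i hi => ?_)
    rw [Finset.mem_Icc] at hi
    have h1 := hmono k i hk1 (by omega) (by omega)
    have h2 : (q k : ℚ) < q i := by exact_mod_cast h1
    intro h; linarith
  have hLn0 : Ln ≠ 0 := by
    rw [hLn]
    refine Finset.prod_ne_zero_iff.mpr (fun i hi => ?_)
    rw [Finset.mem_Icc] at hi
    have h1 := hlqpos i hi.1 hi.2
    have h2 := hqpos n hn le_rfl
    have h3 : (1 : ℚ) ≤ l i := by exact_mod_cast h1
    have h4 : (1 : ℚ) ≤ q n := by exact_mod_cast h2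
    intro h; linarith
  rw [hE]
  have hs : (-1 : ℚ) ^ (n - k) * (-1 : ℚ) ^ (n - k) = 1 := by
    rw [← pow_add]; exact Even.neg_one_pow ⟨n - k, rfl⟩
  have hstep : (-1 : ℚ) ^ (n - k) * ((q n : ℚ) / q k * (Lk / Ln) * R / (Pa * Pb)) *
      ((q k : ℚ) * (Pa * ((-1 : ℚ) ^ (n - k) * Pc)))
      = ((-1 : ℚ) ^ (n - k) * (-1 : ℚ) ^ (n - k)) *
        (((q n : ℚ) * Lk / Ln) * ((R * Pc) / Pb)) := by
    field_simp
  rw [hstep, hs, one_mul, hRC, mul_div_assoc, mul_div_cancel_right₀ _ hPb0]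
  ring

lemma key_eval0 (n : ℕ) (l q : ℕ → ℕ) (hn : 1 ≤ n)
    (hqpos : ∀ i, 1 ≤ i → i ≤ n → 1 ≤ q i)
    (hlqpos : ∀ i, 1 ≤ i → i ≤ n → 1 ≤ l i) :
    ((-1 : ℚ) ^ n * betaQ l q n) * ((-1 : ℚ) ^ n * ∏ i ∈ Finset.Icc 1 n, (q i : ℚ)) =
    ((q n : ℚ) * (∏ i ∈ Finset.Icc 1 (n - 1), ((q n : ℚ) - q i)) /
        ∏ i ∈ Finset.Icc 1 n, ((l i : ℚ) + q n)) *
      ∏ i ∈ Finset.Icc 1 n, (l i : ℚ) := by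
  have hs : (-1 : ℚ) ^ n * (-1 : ℚ) ^ n = 1 := by
    rw [← pow_add]; exact Even.neg_one_pow ⟨n, rfl⟩
  have hsplit : ∏ i ∈ Finset.Icc 1 n, (q i : ℚ) =
      (∏ i ∈ Finset.Icc 1 (n - 1), (q i : ℚ)) * q n := by
    rw [show n = (n - 1) + 1 by omega, Finset.prod_Icc_succ_top (by omega)]
    congr 2 <;> omega
  have hQ0 : (∏ i ∈ Finset.Icc 1 (n - 1), (q i : ℚ)) ≠ 0 := by
    refine Finset.prod_ne_zero_iff.mpr (fun i hi => ?_)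
    rw [Finset.mem_Icc] at hi
    exact Nat.cast_ne_zero.mpr (by have := hqpos i hi.1 (by omega); omega)
  have hLn0 : (∏ i ∈ Finset.Icc 1 n, ((l i : ℚ) + q n)) ≠ 0 := by
    refine Finset.prod_ne_zero_iff.mpr (fun i hi => ?_)
    rw [Finset.mem_Icc] at hi
    have h3 : (1 : ℚ) ≤ l i := by exact_mod_cast hlqpos i hi.1 hi.2
    have h4 : (1 : ℚ) ≤ q n := by exact_mod_cast hqpos n hn le_rfl
    intro h; linarith
  rw [betaQ, hsplit]
  have hstep : ((-1 : ℚ) ^ n *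
        ((∏ i ∈ Finset.Icc 1 n, (l i : ℚ)) / (∏ i ∈ Finset.Icc 1 (n - 1), (q i : ℚ)) *
          ((∏ i ∈ Finset.Icc 1 (n - 1), ((q n : ℚ) - q i)) /
            ∏ i ∈ Finset.Icc 1 n, ((l i : ℚ) + q n)))) *
      ((-1 : ℚ) ^ n * ((∏ i ∈ Finset.Icc 1 (n - 1), (q i : ℚ)) * q n))
      = ((-1 : ℚ) ^ n * (-1 : ℚ) ^ n) *
        (((q n : ℚ) * (∏ i ∈ Finset.Icc 1 (n - 1), ((q n : ℚ) - q i)) /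
          ∏ i ∈ Finset.Icc 1 n, ((l i : ℚ) + q n)) * ∏ i ∈ Finset.Icc 1 n, (l i : ℚ)) := by
    field_simp
  rw [hstep, hs, one_mul]

open Polynomial in
lemma natDeg_prod_le_card (s : Finset ℕ) (g : ℕ → ℚ[X]) (hg : ∀ i ∈ s, (g i).natDegree ≤ 1) :
    (∏ i ∈ s, g i).natDegree ≤ s.card := by
  refine le_trans (Polynomial.natDegree_prod_le _ _) ?_
  calc ∑ i ∈ s, (g i).natDegree ≤ ∑ _i ∈ s, 1 := Finset.sum_le_sum hg
    _ = s.card := by simp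

open Polynomial in
lemma deg_lt_of_natDeg_le (p : ℚ[X]) (m : ℕ) (h : p.natDegree ≤ m) :
    p.degree < ((m + 1 : ℕ) : WithBot ℕ) :=
  lt_of_le_of_lt degree_le_natDegree (by exact_mod_cast Nat.lt_succ_of_le h)

open Polynomial in
lemma poly_eq (n : ℕ) (l q : ℕ → ℕ) (hn : 1 ≤ n)
    (hmono : ∀ i j, 1 ≤ i → i < j → j ≤ n → q i < q j)
    (hqpos : ∀ i, 1 ≤ i → i ≤ n → 1 ≤ q i)
    (hlqpos : ∀ i, 1 ≤ i → i ≤ n → 1 ≤ l i) :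
    C ((q n : ℚ) * (∏ i ∈ Finset.Icc 1 (n - 1), ((q n : ℚ) - q i)) /
        ∏ i ∈ Finset.Icc 1 n, ((l i : ℚ) + q n)) *
      ∏ i ∈ Finset.Icc 1 n, (X + C (l i : ℚ)) =
    (∑ k ∈ Finset.Icc 1 n, C ((-1 : ℚ) ^ (n - k) * alphaQ l q n k) *
        (X * ∏ i ∈ (Finset.Icc 1 n).erase k, (X - C (q i : ℚ)))) +
      C ((-1 : ℚ) ^ n * betaQ l q n) * ∏ i ∈ Finset.Icc 1 n, (X - C (q i : ℚ)) := by
  have hinj : Set.InjOn (fun i => (q i : ℚ)) (Finset.Icc 1 n) := by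
    intro i hi j hj hij
    simp only [Finset.coe_Icc, Set.mem_Icc] at hi hj
    by_contra hne
    rcases Nat.lt_or_ge i j with h | h
    · have h1 := hmono i j hi.1 h hj.2
      have h2 : (q i : ℚ) < q j := by exact_mod_cast h1
      simp only at hij; linarith
    · have hlt : j < i := by omega
      have h1 := hmono j i hj.1 hlt hi.2
      have h2 : (q j : ℚ) < q i := by exact_mod_cast h1
      simp only at hij; linarith
  set s : Finset ℚ := insert 0 ((Finset.Icc 1 n).image (fun i => (q i : ℚ))) with hs
  have h0s : (0 : ℚ) ∉ (Finset.Icc 1 n).image (fun i => (q i : ℚ)) := by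
    simp only [Finset.mem_image, Finset.mem_Icc, not_exists]
    rintro i ⟨hi, h0⟩
    have h1 := hqpos i hi.1 hi.2
    have h2 : (1 : ℚ) ≤ q i := by exact_mod_cast h1
    linarith
  have hcard : s.card = n + 1 := by
    rw [hs, Finset.card_insert_of_notMem h0s, Finset.card_image_of_injOn hinj,
      Nat.card_Icc]
    omega
  apply Polynomial.eq_of_degrees_lt_of_eval_finset_eq s
  · rw [hcard]
    apply deg_lt_of_natDeg_le
    refine le_trans (natDegree_mul_le) ?_
    rw [natDegree_C, zero_add]
    refine le_trans (natDeg_prod_le_card _ _ (fun i _ => by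
      rw [natDegree_X_add_C])) ?_
    rw [Nat.card_Icc]; omega
  · rw [hcard]
    apply deg_lt_of_natDeg_le
    refine le_trans (natDegree_add_le _ _) (max_le ?_ ?_)
    · refine Polynomial.natDegree_sum_le_of_forall_le _ _ (fun k hk => ?_)
      refine le_trans (natDegree_mul_le) ?_
      rw [natDegree_C, zero_add]
      refine le_trans (natDegree_mul_le) ?_
      rw [natDegree_X]
      have h1 : (∏ i ∈ (Finset.Icc 1 n).erase k, (X - C (q i : ℚ))).natDegree
          ≤ ((Finset.Icc 1 n).erase k).card :=
        natDeg_prod_le_card _ _ (fun i _ => by rw [natDegree_X_sub_C])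
      have h2 : ((Finset.Icc 1 n).erase k).card ≤ n - 1 := by
        rw [Finset.card_erase_of_mem (by rwa [Finset.mem_Icc] at hk ⊢), Nat.card_Icc]
        omega
      omega
    · refine le_trans (natDegree_mul_le) ?_
      rw [natDegree_C, zero_add]
      refine le_trans (natDeg_prod_le_card _ _ (fun i _ => by rw [natDegree_X_sub_C])) ?_
      rw [Nat.card_Icc]; omega
  · intro x hx
    rw [hs, Finset.mem_insert] at hx
    rcases hx with rfl | hx
    · -- evaluation at 0
      simp only [eval_mul, eval_add, Polynomial.eval_finset_sum, eval_prod, eval_C, eval_X,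
        eval_sub, zero_mul, mul_zero, zero_add, zero_sub, Finset.sum_const_zero, add_zero]
      have hneg : ∏ i ∈ Finset.Icc 1 n, (-(q i : ℚ)) =
          (-1 : ℚ) ^ n * ∏ i ∈ Finset.Icc 1 n, (q i : ℚ) := by
        have := prod_neg_shift 0 n (fun i => (q i : ℚ))
        simpa using this
      rw [hneg]
      exact (key_eval0 n l q hn hqpos hlqpos).symm
    · obtain ⟨k, hk, rfl⟩ := Finset.mem_image.mp hx
      simp only [eval_mul, eval_add, Polynomial.eval_finset_sum, eval_prod, eval_C, eval_X,
        eval_sub]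
      have hkIcc := hk
      rw [Finset.mem_Icc] at hkIcc
      have hbterm : ∏ i ∈ Finset.Icc 1 n, ((q k : ℚ) - (q i : ℚ)) = 0 :=
        Finset.prod_eq_zero hk (by rw [sub_self])
      rw [hbterm, mul_zero, add_zero]
      rw [Finset.sum_eq_single_of_mem k hk (fun j hj hjk => ?_)]
      · exact (key_eval n k l q hn hkIcc.1 hkIcc.2 hmono hqpos hlqpos).symm
      · have hkmem : k ∈ (Finset.Icc 1 n).erase j := Finset.mem_erase.mpr ⟨hjk.symm, hk⟩
        rw [Finset.prod_eq_zero hkmem (by rw [sub_self]), mul_zero, mul_zero]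

lemma alphaCoeff_eq (l q : ℕ → ℕ) (n k : ℕ) :
    alphaCoeff l q n k = RatFunc.C (alphaQ l q n k) := by
  rw [alphaCoeff, alphaQ]
  simp only [map_div₀, map_mul, map_prod, map_sub, map_add, map_natCast]

lemma betaCoeff_eq (l q : ℕ → ℕ) (n : ℕ) :
    betaCoeff l q n = RatFunc.C (betaQ l q n) := by
  rw [betaCoeff, betaQ]
  simp only [map_div₀, map_mul, map_prod, map_sub, map_add, map_natCast]

lemma const_step (cn cp cd L P z : RatFunc ℚ) (hz : z ≠ 0) (hcd : cd ≠ 0)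
    (h2 : (2 : RatFunc ℚ) ≠ 0) :
    2 * cn * (cp / cd) * (1 / (2 * z)) * L * (z * P) = cn * cp / cd * L * P := by
  field_simp


set_option maxHeartbeats 2000000 in
/-- Partial fraction identity (5.13) of Lemma 5.1 in the case `m = n ≥ 1`:
for strictly increasing positive lists `l_1 < ... < l_n` and `q_1 < ... < q_n`,
as rational functions in `x`,
`[(2q_n)!/(2q_n-1)!]·[∏_{i<n}(q_n-q_i)/∏_i(l_i+q_n)]·[1/(2x+2l_n+2)]
 ·∏_{i=1}^n (x+l_n+l_i+1) / ∏_{i=1}^n (x+l_n-q_i+1)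
 = Σ_{k=1}^n (-1)^{n-k} α_k/(x+l_n-q_k+1) + (-1)^n β'/(x+l_n+1)`. -/
theorem partial_fraction_m_eq_n (n : ℕ) (l q : ℕ → ℕ) (hn : 1 ≤ n)
    (hlpos : ∀ i, 1 ≤ i → i ≤ n → 1 ≤ l i)
    (hlmono : ∀ i, 1 ≤ i → i < n → l i < l (i + 1))
    (hqpos : ∀ i, 1 ≤ i → i ≤ n → 1 ≤ q i)
    (hqmono : ∀ i, 1 ≤ i → i < n → q i < q (i + 1)) :
    ((Nat.factorial (2 * q n) : RatFunc ℚ) / (Nat.factorial (2 * q n - 1) : RatFunc ℚ)) *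
      ((∏ i ∈ Finset.Icc 1 (n - 1), ((q n : RatFunc ℚ) - q i)) /
        (∏ i ∈ Finset.Icc 1 n, ((l i : RatFunc ℚ) + q n))) *
      (1 / (2 * (RatFunc.X : RatFunc ℚ) + 2 * l n + 2)) *
      (∏ i ∈ Finset.Icc 1 n, ((RatFunc.X : RatFunc ℚ) + l n + l i + 1)) /
      (∏ i ∈ Finset.Icc 1 n, ((RatFunc.X : RatFunc ℚ) + l n - q i + 1)) =
    (∑ k ∈ Finset.Icc 1 n, (-1 : RatFunc ℚ) ^ (n - k) * alphaCoeff l q n k /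
        ((RatFunc.X : RatFunc ℚ) + l n - q k + 1)) +
      (-1 : RatFunc ℚ) ^ n * betaCoeff l q n / ((RatFunc.X : RatFunc ℚ) + l n + 1) := by
  have hmono : ∀ i j, 1 ≤ i → i < j → j ≤ n → q i < q j := qlt' n q hqmono
  have cast_eq : ∀ m : ℕ, ((m : RatFunc ℚ)) = RatFunc.C ((m : ℚ)) :=
    fun m => (map_natCast (RatFunc.C : ℚ →+* RatFunc ℚ) m).symm
  set z : RatFunc ℚ := RatFunc.X + RatFunc.C ((l n : ℚ) + 1) with hzdef
  -- rewrite the variable parts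
  have hform : ∀ d : ℚ, RatFunc.X + RatFunc.C d ≠ 0 := by
    intro d
    rw [← RatFunc.algebraMap_X, ← RatFunc.algebraMap_C, ← map_add]
    exact RatFunc.algebraMap_ne_zero (Polynomial.X_add_C_ne_zero d)
  have hz0 : z ≠ 0 := by rw [hzdef]; exact hform _
  have hzq : ∀ c : ℚ, z - RatFunc.C c ≠ 0 := by
    intro c
    have h : z - RatFunc.C c = RatFunc.X + RatFunc.C ((l n : ℚ) + 1 - c) := by
      rw [hzdef, map_sub]; ring
    rw [h]; exact hform _
  have e1 : ∀ i : ℕ, (RatFunc.X : RatFunc ℚ) + l n - q i + 1 = z - RatFunc.C ((q i : ℚ)) := by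
    intro i
    rw [hzdef, cast_eq (l n), cast_eq (q i), map_add, map_one]
    ring
  have e2 : ∀ i : ℕ, (RatFunc.X : RatFunc ℚ) + l n + l i + 1 = z + RatFunc.C ((l i : ℚ)) := by
    intro i
    rw [hzdef, cast_eq (l n), cast_eq (l i), map_add, map_one]
    ring
  have e3 : (RatFunc.X : RatFunc ℚ) + l n + 1 = z := by
    rw [hzdef, cast_eq (l n), map_add, map_one]
    ring
  have e4 : 2 * (RatFunc.X : RatFunc ℚ) + 2 * ((l n : RatFunc ℚ)) + 2 = RatFunc.C 2 * z := by
    rw [hzdef, cast_eq (l n), map_add, map_one, map_ofNat (RatFunc.C : ℚ →+* RatFunc ℚ) 2]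
    ring
  rw [e3, e4]
  simp only [e1, e2]
  -- constant products become C-constants
  have cprod1 : (∏ i ∈ Finset.Icc 1 (n - 1), ((q n : RatFunc ℚ) - q i)) =
      RatFunc.C (∏ i ∈ Finset.Icc 1 (n - 1), ((q n : ℚ) - q i)) := by
    rw [map_prod]
    exact Finset.prod_congr rfl fun i _ => by rw [map_sub, map_natCast, map_natCast]
  have cprod2 : (∏ i ∈ Finset.Icc 1 n, ((l i : RatFunc ℚ) + q n)) =
      RatFunc.C (∏ i ∈ Finset.Icc 1 n, ((l i : ℚ) + q n)) := by
    rw [map_prod]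
    exact Finset.prod_congr rfl fun i _ => by rw [map_add, map_natCast, map_natCast]
  rw [cprod1, cprod2, cast_eq (Nat.factorial (2 * q n)), cast_eq (Nat.factorial (2 * q n - 1))]
  -- scalar nonvanishing facts
  have hqn1 : 1 ≤ q n := hqpos n hn le_rfl
  have hfacratio : ((2 * q n).factorial : ℚ) / ((2 * q n - 1).factorial : ℚ)
      = 2 * (q n : ℚ) := by
    have h2 : ((2 * q n).factorial : ℚ) = (2 * (q n : ℚ)) * ((2 * q n - 1).factorial : ℚ) := by
      push_cast [← Nat.mul_factorial_pred (show 2 * q n ≠ 0 by omega)]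
      ring
    have hf0 : (((2 * q n - 1).factorial : ℚ)) ≠ 0 := Nat.cast_ne_zero.mpr (Nat.factorial_ne_zero _)
    rw [h2]
    field_simp
  have hpd0 : (∏ i ∈ Finset.Icc 1 n, ((l i : ℚ) + q n)) ≠ 0 := by
    refine Finset.prod_ne_zero_iff.mpr (fun i hi => ?_)
    rw [Finset.mem_Icc] at hi
    have h3 : (1 : ℚ) ≤ l i := by exact_mod_cast hlpos i hi.1 hi.2
    have h4 : (1 : ℚ) ≤ q n := by exact_mod_cast hqn1
    intro h; linarith
  have hPZ0 : (∏ i ∈ Finset.Icc 1 n, (z - RatFunc.C ((q i : ℚ)))) ≠ 0 :=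
    Finset.prod_ne_zero_iff.mpr fun i _ => hzq _
  have hCpd0 : RatFunc.C (∏ i ∈ Finset.Icc 1 n, ((l i : ℚ) + q n)) ≠ 0 := by
    rw [← RatFunc.algebraMap_C]
    exact RatFunc.algebraMap_ne_zero (Polynomial.C_ne_zero.mpr hpd0)
  have hC2 : (RatFunc.C 2 : RatFunc ℚ) ≠ 0 := by
    rw [← RatFunc.algebraMap_C]
    exact RatFunc.algebraMap_ne_zero (Polynomial.C_ne_zero.mpr two_ne_zero)
  -- the numerator identity, transported to RatFunc via eval₂ at z
  have hnum := congrArg (Polynomial.eval₂ (RatFunc.C : ℚ →+* RatFunc ℚ) z)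
    (poly_eq n l q hn hmono hqpos hlpos)
  simp only [Polynomial.eval₂_mul, Polynomial.eval₂_add, Polynomial.eval₂_sub,
    Polynomial.eval₂_C, Polynomial.eval₂_X, Polynomial.eval₂_finset_sum,
    Polynomial.eval₂_finset_prod] at hnum
  -- constants of the right-hand side
  have hconsta : ∀ k : ℕ, (-1 : RatFunc ℚ) ^ (n - k) * alphaCoeff l q n k =
      RatFunc.C ((-1 : ℚ) ^ (n - k) * alphaQ l q n k) := by
    intro k
    rw [alphaCoeff_eq, map_mul, map_pow, map_neg, map_one]
  have hconstb : (-1 : RatFunc ℚ) ^ n * betaCoeff l q n =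
      RatFunc.C ((-1 : ℚ) ^ n * betaQ l q n) := by
    rw [betaCoeff_eq, map_mul, map_pow, map_neg, map_one]
  simp only [hconsta, hconstb]
  -- put the right-hand side over the common denominator z * PZ
  have hterm : ∀ k ∈ Finset.Icc 1 n,
      RatFunc.C ((-1 : ℚ) ^ (n - k) * alphaQ l q n k) / (z - RatFunc.C ((q k : ℚ))) =
      RatFunc.C ((-1 : ℚ) ^ (n - k) * alphaQ l q n k) *
        (z * ∏ i ∈ (Finset.Icc 1 n).erase k, (z - RatFunc.C ((q i : ℚ)))) /
        (z * ∏ i ∈ Finset.Icc 1 n, (z - RatFunc.C ((q i : ℚ)))) := by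
    intro k hk
    rw [div_eq_div_iff (hzq _) (mul_ne_zero hz0 hPZ0),
      ← Finset.mul_prod_erase _ _ hk]
    ring
  rw [Finset.sum_congr rfl hterm, ← Finset.sum_div]
  have hbeta : RatFunc.C ((-1 : ℚ) ^ n * betaQ l q n) / z =
      RatFunc.C ((-1 : ℚ) ^ n * betaQ l q n) *
        (∏ i ∈ Finset.Icc 1 n, (z - RatFunc.C ((q i : ℚ)))) /
        (z * ∏ i ∈ Finset.Icc 1 n, (z - RatFunc.C ((q i : ℚ)))) := by
    rw [div_eq_div_iff hz0 (mul_ne_zero hz0 hPZ0)]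
    ring
  rw [hbeta, ← add_div, ← hnum]
  -- finally, a computation with constants
  rw [← map_div₀, hfacratio,
    div_eq_div_iff hPZ0 (mul_ne_zero hz0 hPZ0), map_div₀, map_mul, map_mul,
    map_ofNat (RatFunc.C : ℚ →+* RatFunc ℚ) 2]
  exact const_step _ _ _ _ _ _ hz0 hCpd0
    (by rw [← map_ofNat (RatFunc.C : ℚ →+* RatFunc ℚ) 2]; exact hC2)
end

section
/- For strictly increasing positive integer lists l=(l_1,...,l_m) with m ≥ 2 and q=(q_1,...,q_n), the polynomial P̄_{l,q}(x) of the paper satisfies P̄_{l,q}(0) = P̄_{l^{(m)},q}(l_m - l_{m-1} - 1), where l^{(m)} is l with its last entry removed. -/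
/-- The constant `c̄_{l,q}` of formula (1.4):
`c̄_{l,q} = 2^{C(n-m,2)-m} ∏_{i=1}^m 1/(2l_i-1)! ∏_{i=1}^n 1/(2q_i)!
  · ∏_{i<j}(l_j-l_i) ∏_{i<j}(q_j-q_i) / ∏_{i,j}(l_i+q_j)`,
where `C(a,2) = a(a-1)/2` for any integer `a`. -/
noncomputable def cBarConst (l q : ℕ → ℕ) (m n : ℕ) : ℚ :=
  (2 : ℚ) ^ ((((n : ℤ) - m) * ((n : ℤ) - m - 1)) / 2 - m) *
    (∏ i ∈ Finset.Icc 1 m, ((Nat.factorial (2 * l i - 1) : ℚ))⁻¹) *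
    (∏ i ∈ Finset.Icc 1 n, ((Nat.factorial (2 * q i) : ℚ))⁻¹) *
    ((∏ i ∈ Finset.Icc 1 m, ∏ j ∈ Finset.Icc (i + 1) m, ((l j : ℚ) - l i)) *
      (∏ i ∈ Finset.Icc 1 n, ∏ j ∈ Finset.Icc (i + 1) n, ((q j : ℚ) - q i))) /
    (∏ i ∈ Finset.Icc 1 m, ∏ j ∈ Finset.Icc 1 n, ((l i : ℚ) + q j))

/-- The polynomial `P̄_{l,q}(x)` in the form of formula (5.2):
`P̄_{l,q}(x) = c̄_{l,q} · B̄_{m,n}(x+l_m-m)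
  · ∏_{i=1}^m ∏_{j=i}^{l_i-1} (x+l_m-j)(x+l_m-m+n+j+1)
  · ∏_{i=1}^n ∏_{j=i}^{q_i-1} (x+l_m-m+n-j)(x+l_m+j+1)`. -/
noncomputable def PbarPoly (l q : ℕ → ℕ) (m n : ℕ) (x : ℚ) : ℚ :=
  cBarConst l q m n * Bbar m n (x + l m - m) *
    (∏ i ∈ Finset.Icc 1 m, ∏ j ∈ Finset.Icc i (l i - 1),
      (x + l m - j) * (x + l m - m + n + j + 1)) *
    (∏ i ∈ Finset.Icc 1 n, ∏ j ∈ Finset.Icc i (q i - 1),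
      (x + l m - m + n - j) * (x + l m + j + 1))

open Finset

namespace PbarAux

lemma rfac_succ_top (a : ℚ) (n : ℕ) : rfac a (n+1) = rfac a n * (a + n) := by
  simp [rfac, Finset.prod_range_succ]

lemma rfac_succ_bot (a : ℚ) (n : ℕ) : rfac a (n+1) = a * rfac (a+1) n := by
  rw [rfac, Finset.prod_range_succ']
  rw [mul_comm]
  simp only [Nat.cast_zero, add_zero]
  congr 1
  refine Finset.prod_congr rfl fun i _ => ?_
  push_cast; ring

lemma rfac_shift1 (a : ℚ) (n : ℕ) (ha : a ≠ 0) :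
    rfac (a+1) n = rfac a n * ((a+n)/a) := by
  have key : a * rfac (a+1) n = rfac a n * (a+n) := by
    rw [← rfac_succ_bot, rfac_succ_top]
  field_simp
  linear_combination key

lemma rfac_shift2 (a : ℚ) (k : ℕ) (ha : a ≠ 0) :
    rfac (a+1) (k+1) = rfac a k * ((a+k)*(a+k+1)/a) := by
  have key : a * rfac (a+1) (k+1) = rfac a k * ((a+k)*(a+k+1)) := by
    rw [← rfac_succ_bot, show k+1+1 = (k+1)+1 from rfl, rfac_succ_top, rfac_succ_top]
    push_cast; ring
  field_simp
  linear_combination key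

lemma rfac_pos (a : ℚ) (n : ℕ) (h : 0 < a) : 0 < rfac a n :=
  Finset.prod_pos fun i _ => by positivity

lemma prod_shift (f : ℕ → ℚ) (i N : ℕ) (hi : 1 ≤ i) (h : i ≤ N + 1) :
    f i * ∏ j ∈ Icc i N, f (j+1) = (∏ j ∈ Icc i N, f j) * f (N+1) := by
  induction N with
  | zero =>
      have : i = 1 := by omega
      subst this
      simp [Finset.Icc_eq_empty (show ¬ (1:ℕ) ≤ 0 by omega)]
  | succ N ih =>
      rcases Nat.lt_or_ge i (N+2) with h' | h'
      · have hiN : i ≤ N + 1 := by omega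
        rw [Finset.prod_Icc_succ_top hiN, Finset.prod_Icc_succ_top hiN]
        linear_combination f (N+1+1) * (ih hiN)
      · have : i = N + 2 := by omega
        subst this
        simp [Finset.Icc_eq_empty (show ¬ (N+2:ℕ) ≤ N+1 by omega)]

lemma prod_Icc_shift (f : ℕ → ℚ) (a b k : ℕ) :
    ∏ t ∈ Icc (a+k) (b+k), f t = ∏ t ∈ Icc a b, f (t+k) := by
  rw [← Finset.map_add_right_Icc, Finset.prod_map]
  rfl

lemma prod_Icc_reflect (f : ℕ → ℚ) (N a b : ℕ) (ha : a ≤ N) (hb : b ≤ N) :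
    ∏ j ∈ Icc a b, f (N - j) = ∏ t ∈ Icc (N-b) (N-a), f t := by
  apply Finset.prod_nbij' (fun j => N - j) (fun t => N - t) <;> intros <;>
    simp_all [Finset.mem_Icc] <;> omega

lemma prod_Icc_cast (b e : ℕ) (hb : 1 ≤ b) (hbe : b ≤ e+1) :
    ∏ t ∈ Icc b e, (t:ℚ) = (Nat.factorial e : ℚ) / (Nat.factorial (b-1) : ℚ) := by
  induction e with
  | zero =>
      have : b = 1 := by omega
      subst this
      simp [Finset.Icc_eq_empty (show ¬ (1:ℕ) ≤ 0 by omega)]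
  | succ e ih =>
      rcases Nat.lt_or_ge b (e+2) with h' | h'
      · have hbe' : b ≤ e + 1 := by omega
        rw [Finset.prod_Icc_succ_top hbe', ih (by omega), Nat.factorial_succ]
        have hnz : (Nat.factorial (b-1) : ℚ) ≠ 0 := by positivity
        push_cast
        field_simp
      · have : b = e + 2 := by omega
        subst this
        simp only [Finset.Icc_eq_empty (show ¬ (e+2:ℕ) ≤ e+1 by omega), Finset.prod_empty,
          show e+2-1 = e+1 by omega]
        exact (div_self (by positivity)).symm

/-- odd product -/
noncomputable def OP (b e : ℕ) : ℚ := ∏ t ∈ Icc b e, (2*(t:ℚ)+1)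

lemma OP_pos (b e : ℕ) : 0 < OP b e :=
  Finset.prod_pos fun i _ => by positivity

lemma OP_succ_top (b e : ℕ) (h : b ≤ e+1) : OP b (e+1) = OP b e * (2*(e+1:ℚ)+1) := by
  rw [OP, OP, Finset.prod_Icc_succ_top h]
  push_cast; ring

lemma OP_bot (b e : ℕ) (h : b ≤ e) : OP b e = (2*(b:ℚ)+1) * OP (b+1) e := by
  rw [OP, OP, show Icc b e = insert b (Icc (b+1) e) from by
    ext t; simp [Finset.mem_Icc, Finset.mem_insert]; omega,
    Finset.prod_insert (by simp)]

lemma rfac_nat (L n : ℕ) (hL : 1 ≤ L) :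
    rfac (L:ℚ) n = (Nat.factorial (L+n-1) : ℚ) / (Nat.factorial (L-1) : ℚ) := by
  induction n with
  | zero =>
      simp only [rfac, Finset.range_zero, Finset.prod_empty, Nat.add_zero]
      exact (div_self (by positivity)).symm
  | succ n ih =>
      rw [rfac_succ_top, ih]
      rw [show L+(n+1)-1 = (L+n-1)+1 by omega, Nat.factorial_succ]
      have h2 : ((L + n - 1 : ℕ) : ℚ) = (L:ℚ) + n - 1 := by
        have h3 : ((L+n-1)+1 : ℕ) = L + n := by omega
        have h4 := congrArg (fun x : ℕ => (x:ℚ)) h3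
        push_cast at h4; linarith
      have hnz : (Nat.factorial (L-1) : ℚ) ≠ 0 := by positivity
      push_cast [h2]
      field_simp
      ring

lemma rfac_half (L n : ℕ) (hL : 1 ≤ L) :
    rfac ((L:ℚ)+1/2) n = OP L (L+n-1) / 2^n := by
  induction n with
  | zero =>
      rw [show L+0-1 = L-1 by omega]
      simp [rfac, OP, Finset.Icc_eq_empty (show ¬ (L:ℕ) ≤ L-1 by omega)]
  | succ n ih =>
      rw [rfac_succ_top, ih, show L+(n+1)-1 = (L+n-1)+1 by omega,
        OP_succ_top _ _ (by omega)]
      have h2 : ((L + n - 1 : ℕ) : ℚ) + 1 = (L:ℚ) + n := by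
        have h3 : ((L+n-1)+1 : ℕ) = L + n := by omega
        have h4 := congrArg (fun x : ℕ => (x:ℚ)) h3
        push_cast at h4; linarith
      rw [h2]
      rw [div_mul_eq_mul_div, pow_succ, div_eq_div_iff (by positivity) (by positivity)]
      ring

lemma core (m L : ℕ) (hm : 1 ≤ m) (hL : m ≤ L) :
    (2:ℚ)^(m - m/2 - 1) * OP (L - m/2) (L-1) * (Nat.factorial (L-1) : ℚ) *
      (Nat.factorial (2*L-m) : ℚ)
      = (Nat.factorial (2*L-1) : ℚ) * (Nat.factorial (L - (m - m/2)) : ℚ) := by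
  revert hL
  induction m, hm using Nat.le_induction with
  | base =>
      intro hL
      simp only [show (1:ℕ)/2 = 0 by norm_num, Nat.sub_zero, show 1-0-1 = 0 by norm_num,
        pow_zero, show L - (1-0) = L - 1 by omega, show 2*L-1 = 2*L-1 from rfl]
      rw [show OP L (L-1) = 1 from by
        rw [OP, Finset.Icc_eq_empty (show ¬ (L:ℕ) ≤ L-1 by omega), Finset.prod_empty]]
      ring
  | succ m hm ih =>
      intro hL
      have IH := ih (by omega)
      rcases Nat.even_or_odd m with ⟨t, ht⟩ | ⟨t, ht⟩
      · -- m = t + t, t ≥ 1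
        have ht1 : 1 ≤ t := by omega
        have e1 : (m+1)/2 = t := by omega
        have e2 : m/2 = t := by omega
        have e3 : m + 1 - (m+1)/2 - 1 = t := by omega
        have e4 : m - m/2 - 1 = t - 1 := by omega
        have e6 : m - m/2 = t := by omega
        rw [e1, show m+1-t-1 = t by omega, show L - (m+1-t) = L - (t+1) by omega]
        rw [e2, show m-t-1 = t-1 by omega, show L-(m-t) = L-t by omega] at IH
        -- IH : 2^(t-1) * OP (L-t) (L-1) * (L-1)! * (2L-m)! = (2L-1)! * (L-t)!
        have hf1 : (Nat.factorial (2*L - m) : ℚ)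
            = (2*(L:ℚ) - 2*t) * (Nat.factorial (2*L - (m+1)) : ℚ) := by
          rw [show 2*L - m = (2*L - (m+1)) + 1 by omega, Nat.factorial_succ]
          have : ((2*L - (m+1) : ℕ) : ℚ) = 2*(L:ℚ) - 2*t - 1 := by
            have h3 : ((2*L - (m+1)) + 1 : ℕ) = 2*L - 2*t := by omega
            have h4 := congrArg (fun x : ℕ => (x:ℚ)) h3
            push_cast [Nat.cast_sub (show 2*t ≤ 2*L by omega)] at h4
            linarith
          push_cast
          rw [this]; ring
        have hf2 : (Nat.factorial (L - t) : ℚ)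
            = ((L:ℚ) - t) * (Nat.factorial (L - (t+1)) : ℚ) := by
          rw [show L - t = (L - (t+1)) + 1 by omega, Nat.factorial_succ]
          have : ((L - (t+1) : ℕ) : ℚ) = (L:ℚ) - t - 1 := by
            have h3 : ((L - (t+1)) + 1 : ℕ) = L - t := by omega
            have h4 := congrArg (fun x : ℕ => (x:ℚ)) h3
            push_cast [Nat.cast_sub (show t ≤ L by omega)] at h4
            linarith
          push_cast
          rw [this]; ring
        rw [hf1, hf2] at IH
        have hpow : (2:ℚ)^t = 2^(t-1) * 2 := by
          conv_lhs => rw [show t = (t-1)+1 by omega, pow_succ]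
        have hnz : (L:ℚ) - t ≠ 0 := by
          have : (t:ℚ) < L := by exact_mod_cast (by omega : t < L)
          linarith
        apply mul_right_cancel₀ hnz
        rw [hpow]
        linear_combination IH
      · -- m = 2t + 1
        have e1 : (m+1)/2 = t+1 := by omega
        have e2 : m/2 = t := by omega
        have e3 : m + 1 - (m+1)/2 - 1 = t := by omega
        have e4 : m - m/2 - 1 = t := by omega
        have e6 : m - m/2 = t + 1 := by omega
        rw [e1, show m+1-(t+1)-1 = t by omega,
          show L - (m+1-(t+1)) = L - (t+1) by omega]
        rw [e2, show m-t-1 = t by omega, show L-(m-t) = L-(t+1) by omega] at IH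
        -- IH : 2^t * OP (L-t) (L-1) * (L-1)! * (2L-m)! = (2L-1)! * (L-(t+1))!
        have hcast : ((L - (t+1) : ℕ) : ℚ) = (L:ℚ) - (t+1) := by
          push_cast [Nat.cast_sub (show t+1 ≤ L by omega)]; ring
        have hOP := OP_bot (L-(t+1)) (L-1) (by omega)
        rw [show L-(t+1)+1 = L-t by omega, hcast] at hOP
        have hf1 : (Nat.factorial (2*L - m) : ℚ)
            = (2*((L:ℚ) - (t+1)) + 1) * (Nat.factorial (2*L - (m+1)) : ℚ) := by
          rw [show 2*L - m = (2*L - (m+1)) + 1 by omega, Nat.factorial_succ]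
          have : ((2*L - (m+1) : ℕ) : ℚ) = 2*(L:ℚ) - 2*t - 2 := by
            have h3 : ((2*L - (m+1)) + 1 : ℕ) = 2*L - 2*t - 1 := by omega
            have h4 := congrArg (fun x : ℕ => (x:ℚ)) h3
            push_cast [Nat.cast_sub (show 2*t ≤ 2*L by omega),
              Nat.cast_sub (show 1 ≤ 2*L - 2*t by omega)] at h4
            push_cast [Nat.cast_sub (show 2*t ≤ 2*L by omega)] at h4
            linarith
          push_cast
          rw [this]; ring
        rw [hf1] at IH
        rw [hOP]
        linear_combination IH

lemma blk_P1 (m L : ℕ) (hm : 1 ≤ m) (hL : m ≤ L) :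
    ∏ j ∈ Icc (m/2+1) m, ((L:ℚ) - m + j)
      = (Nat.factorial L : ℚ) / (Nat.factorial (L - (m - m/2)) : ℚ) := by
  have h1 : ∀ j ∈ Icc (m/2+1) m, ((L:ℚ) - m + j) = (((j + (L-m) : ℕ)) : ℚ) := by
    intro j hj
    push_cast [Nat.cast_sub hL]
    ring
  rw [Finset.prod_congr rfl h1, ← prod_Icc_shift (fun t => (t:ℚ)) (m/2+1) m (L-m)]
  rw [show m/2+1+(L-m) = (L - (m - m/2)) + 1 by omega, show m + (L-m) = L by omega]
  rw [prod_Icc_cast _ _ (by omega) (by omega)]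
  rw [show (L - (m - m/2)) + 1 - 1 = L - (m - m/2) by omega]

lemma blk_P2 (m L : ℕ) (hm : 1 ≤ m) (hL : m ≤ L) :
    ∏ j ∈ Icc ((m+1)/2) (m-1), ((L:ℚ) - m + j + 1/2)
      = OP (L - m/2) (L-1) / 2^(m/2) := by
  have h1 : ∀ j ∈ Icc ((m+1)/2) (m-1), ((L:ℚ) - m + j + 1/2)
      = (2*(((j + (L-m) : ℕ)) : ℚ)+1) / 2 := by
    intro j hj
    push_cast [Nat.cast_sub hL]
    ring
  rw [Finset.prod_congr rfl h1, Finset.prod_div_distrib, Finset.prod_const,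
    ← prod_Icc_shift (fun t => 2*(t:ℚ)+1) ((m+1)/2) (m-1) (L-m)]
  rw [show (m+1)/2+(L-m) = L - m/2 by omega, show m-1 + (L-m) = L-1 by omega]
  rw [Nat.card_Icc, show m-1+1-(m+1)/2 = m/2 by omega, OP]

lemma blk_W (n L : ℕ) :
    ∏ i ∈ Icc 1 n, ((L:ℚ) + i)
      = (Nat.factorial (L+n) : ℚ) / (Nat.factorial L : ℚ) := by
  have h1 : ∀ i ∈ Icc 1 n, ((L:ℚ) + i) = (((i + L : ℕ)) : ℚ) := by
    intro i hi; push_cast; ring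
  rw [Finset.prod_congr rfl h1, ← prod_Icc_shift (fun t => (t:ℚ)) 1 n L]
  rw [show 1+L = (L+1) by omega, show n+L = L+n by omega]
  rw [prod_Icc_cast _ _ (by omega) (by omega)]
  rw [show L+1-1 = L by omega]

lemma blk_T1 (n L : ℕ) (hL : 1 ≤ L) :
    ∏ i ∈ Icc 1 n, (2*(L:ℚ)+2*i-1) = OP L (L+n-1) := by
  have h1 : ∀ i ∈ Icc 1 n, (2*(L:ℚ)+2*i-1) = 2*(((i + (L-1) : ℕ)) : ℚ)+1 := by
    intro i hi; push_cast [Nat.cast_sub hL]; ring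
  rw [Finset.prod_congr rfl h1, ← prod_Icc_shift (fun t => 2*(t:ℚ)+1) 1 n (L-1)]
  rw [show 1+(L-1) = L by omega, show n+(L-1) = L+n-1 by omega, OP]

lemma blk_T3 (m n L : ℕ) (hL : m ≤ L) :
    ∏ i ∈ Icc 1 n, (2*(L:ℚ)-m+i)
      = (Nat.factorial (2*L-m+n) : ℚ) / (Nat.factorial (2*L-m) : ℚ) := by
  have h1 : ∀ i ∈ Icc 1 n, (2*(L:ℚ)-m+i) = (((i + (2*L-m) : ℕ)) : ℚ) := by
    intro i hi; push_cast [Nat.cast_sub (show m ≤ 2*L by omega)]; ring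
  rw [Finset.prod_congr rfl h1, ← prod_Icc_shift (fun t => (t:ℚ)) 1 n (2*L-m)]
  rw [show 1+(2*L-m) = 2*L-m+1 by omega, show n+(2*L-m) = 2*L-m+n by omega]
  rw [prod_Icc_cast _ _ (by omega) (by omega)]
  rw [show 2*L-m+1-1 = 2*L-m by omega]

lemma blk_U1 (m L : ℕ) (hm : 1 ≤ m) (hL : m ≤ L) :
    ∏ j ∈ Icc m (L-1), ((L:ℚ)-j) = (Nat.factorial (L-m) : ℚ) := by
  have h1 : ∀ j ∈ Icc m (L-1), ((L:ℚ)-j) = (((L - j : ℕ)) : ℚ) := by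
    intro j hj
    rw [Finset.mem_Icc] at hj
    push_cast [Nat.cast_sub (show j ≤ L by omega)]
    ring
  rw [Finset.prod_congr rfl h1,
    prod_Icc_reflect (fun t => (t:ℚ)) L m (L-1) hL (by omega)]
  rw [show L-(L-1) = 1 by omega, prod_Icc_cast _ _ (by omega) (by omega)]
  norm_num

lemma blk_U2 (m n L : ℕ) (hm : 1 ≤ m) (hL : m ≤ L) :
    ∏ j ∈ Icc m (L-1), ((L:ℚ)-m+n+j+1)
      = (Nat.factorial (2*L-m+n) : ℚ) / (Nat.factorial (L+n) : ℚ) := by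
  have h1 : ∀ j ∈ Icc m (L-1), ((L:ℚ)-m+n+j+1) = (((j + (L+n+1-m) : ℕ)) : ℚ) := by
    intro j hj
    push_cast [Nat.cast_sub (show m ≤ L+n+1 by omega)]
    ring
  rw [Finset.prod_congr rfl h1, ← prod_Icc_shift (fun t => (t:ℚ)) m (L-1) (L+n+1-m)]
  rw [show m+(L+n+1-m) = L+n+1 by omega, show L-1+(L+n+1-m) = 2*L-m+n by omega]
  rw [prod_Icc_cast _ _ (by omega) (by omega)]
  rw [show L+n+1-1 = L+n by omega]

lemma blk_V (m L : ℕ) (hm : 1 ≤ m) (hL : m ≤ L) :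
    ∏ i ∈ Icc 1 (m-1), ((L:ℚ)-i)
      = (Nat.factorial (L-1) : ℚ) / (Nat.factorial (L-m) : ℚ) := by
  have h1 : ∀ i ∈ Icc 1 (m-1), ((L:ℚ)-i) = (((L - i : ℕ)) : ℚ) := by
    intro i hi
    rw [Finset.mem_Icc] at hi
    push_cast [Nat.cast_sub (show i ≤ L by omega)]
    ring
  rw [Finset.prod_congr rfl h1,
    prod_Icc_reflect (fun t => (t:ℚ)) L 1 (m-1) (by omega) (by omega)]
  rw [prod_Icc_cast _ _ (by omega) (by omega)]
  rw [show L-(m-1)-1 = L-m by omega]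

lemma Kident (m n L : ℕ) (hm : 1 ≤ m) (hL : m ≤ L) :
    (2:ℚ)^((m:ℤ) - n - 1) * ((Nat.factorial (2*L-1) : ℕ):ℚ)⁻¹ *
      (((2:ℚ)^n)⁻¹ * (((L:ℚ)+n)/L) *
        (∏ j ∈ Icc (m/2+1) m, ((L:ℚ) - m + j)) *
        (∏ j ∈ Icc ((m+1)/2) (m-1), ((L:ℚ) - m + j + 1/2)) *
        (rfac (L:ℚ) n / rfac ((L:ℚ)+1/2) n) *
        (∏ i ∈ Icc 1 n, (2*(L:ℚ)+2*i-1)*(2*(L:ℚ)+2*i)/(2*(L:ℚ)-m+i))) *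
      (∏ j ∈ Icc m (L-1), ((L:ℚ)-j)*((L:ℚ)-m+n+j+1)) *
      (∏ i ∈ Icc 1 (m-1), ((L:ℚ)-i)) *
      (∏ i ∈ Icc 1 n, ((L:ℚ)+i)⁻¹) = 1 := by
  have hL1 : 1 ≤ L := le_trans hm hL
  -- trip split
  have hTrip : ∏ i ∈ Icc 1 n, (2*(L:ℚ)+2*i-1)*(2*(L:ℚ)+2*i)/(2*(L:ℚ)-m+i)
      = (∏ i ∈ Icc 1 n, (2*(L:ℚ)+2*i-1)) * (∏ i ∈ Icc 1 n, (2*(L:ℚ)+2*i))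
        / (∏ i ∈ Icc 1 n, (2*(L:ℚ)-m+i)) := by
    rw [Finset.prod_div_distrib, Finset.prod_mul_distrib]
  have hT2 : ∏ i ∈ Icc 1 n, (2*(L:ℚ)+2*i)
      = 2^n * ((Nat.factorial (L+n) : ℚ) / (Nat.factorial L : ℚ)) := by
    have h1 : ∀ i ∈ Icc 1 n, (2*(L:ℚ)+2*i) = 2 * ((L:ℚ) + i) := by
      intro i hi; ring
    rw [Finset.prod_congr rfl h1, Finset.prod_mul_distrib, Finset.prod_const, blk_W,
      Nat.card_Icc, show n+1-1 = n by omega]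
  have hUsplit : ∏ j ∈ Icc m (L-1), ((L:ℚ)-j)*((L:ℚ)-m+n+j+1)
      = (∏ j ∈ Icc m (L-1), ((L:ℚ)-j)) * (∏ j ∈ Icc m (L-1), ((L:ℚ)-m+n+j+1)) :=
    Finset.prod_mul_distrib
  have hWinv : ∏ i ∈ Icc 1 n, ((L:ℚ)+i)⁻¹ = (∏ i ∈ Icc 1 n, ((L:ℚ)+i))⁻¹ := by
    rw [← Finset.prod_inv_distrib]
  rw [hTrip, hT2, hUsplit, hWinv, blk_P1 m L hm hL, blk_P2 m L hm hL, blk_T1 n L hL1,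
    blk_T3 m n L hL, blk_U1 m L hm hL, blk_U2 m n L hm hL, blk_V m L hm hL, blk_W n L,
    rfac_nat L n hL1, rfac_half L n hL1]
  -- 2-power
  have h2pow : (2:ℚ)^((m:ℤ)-n-1) = 2^(m-m/2-1) * 2^(m/2) * ((2:ℚ)^n)⁻¹ := by
    rw [show (m:ℤ)-n-1 = ((m-1:ℕ):ℤ) - (n:ℕ) by push_cast [Nat.cast_sub hm]; ring]
    rw [zpow_sub₀ (by norm_num), zpow_natCast, zpow_natCast]
    rw [show m-1 = (m-m/2-1)+(m/2) by omega, pow_add]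
    ring
  rw [h2pow]
  -- core substitution
  have hOPv : OP (L - m/2) (L-1)
      = ((Nat.factorial (2*L-1) : ℚ) * (Nat.factorial (L-(m-m/2)) : ℚ))
        / (2^(m-m/2-1) * (Nat.factorial (L-1) : ℚ) * (Nat.factorial (2*L-m) : ℚ)) := by
    have hc := core m L hm hL
    field_simp
    linear_combination hc
  rw [hOPv]
  -- factorial merges
  have hm1 : (Nat.factorial (L+n) : ℚ) = ((L:ℚ)+n) * (Nat.factorial (L+n-1) : ℚ) := by
    rw [show L+n = (L+n-1)+1 by omega, Nat.factorial_succ]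
    have : ((L+n-1 : ℕ) : ℚ) = (L:ℚ)+n-1 := by
      push_cast [Nat.cast_sub (show 1 ≤ L+n by omega)]; ring
    push_cast
    rw [this]; ring
  have hm2 : (Nat.factorial L : ℚ) = (L:ℚ) * (Nat.factorial (L-1) : ℚ) := by
    rw [show L = (L-1)+1 by omega, Nat.factorial_succ]
    have : ((L-1 : ℕ) : ℚ) = (L:ℚ)-1 := by
      push_cast [Nat.cast_sub (show 1 ≤ L by omega)]; ring
    push_cast
    rw [this]
    try rw [show (L-1)+1 = L by omega]
    try ring
  rw [hm1, hm2]
  have nz1 : (L:ℚ) ≠ 0 := by positivity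
  have nz2 : ((L:ℚ)+n) ≠ 0 := by positivity
  have nz3 : OP L (L+n-1) ≠ 0 := ne_of_gt (OP_pos _ _)
  have nz4 : (Nat.factorial (L+n-1) : ℚ) ≠ 0 := by positivity
  have nz5 : (Nat.factorial (L-1) : ℚ) ≠ 0 := by positivity
  have nz6 : (Nat.factorial (2*L-1) : ℚ) ≠ 0 := by positivity
  have nz7 : (Nat.factorial (2*L-m) : ℚ) ≠ 0 := by positivity
  have nz8 : (Nat.factorial (2*L-m+n) : ℚ) ≠ 0 := by positivity
  have nz9 : (Nat.factorial (L-(m-m/2)) : ℚ) ≠ 0 := by positivity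
  have nz10 : (Nat.factorial (L-m) : ℚ) ≠ 0 := by positivity
  have nz11 : (2:ℚ) ≠ 0 := by norm_num
  field_simp

lemma tentIntBar_succ (Y : ℚ) (m : ℕ) :
    tentIntBar Y (m+1) = tentIntBar Y m * ∏ j ∈ Icc ((m+1)/2+1) (m+1), (Y + j) := by
  rw [tentIntBar, tentIntBar]
  have h1 : ∀ j ∈ Icc 1 (m+1), (Y+(j:ℚ))^(min j (m+1+1-j))
      = (Y+(j:ℚ))^(min j (m+1-j)) * (Y+(j:ℚ))^(if (m+1)/2+1 ≤ j then 1 else 0) := by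
    intro j hj
    rw [Finset.mem_Icc] at hj
    rw [← pow_add]
    congr 1
    split_ifs with h <;> omega
  rw [Finset.prod_congr rfl h1, Finset.prod_mul_distrib]
  congr 1
  · symm
    apply Finset.prod_subset (Finset.Icc_subset_Icc_right (by omega))
    intro j hj hne
    have : j = m+1 := by
      simp only [Finset.mem_Icc] at hj hne; omega
    subst this
    simp
  · rw [← Finset.prod_subset (Finset.Icc_subset_Icc (by omega) (by omega) :
      Icc ((m+1)/2+1) (m+1) ⊆ Icc 1 (m+1))]
    · apply Finset.prod_congr rfl
      intro j hj
      rw [Finset.mem_Icc] at hj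
      rw [if_pos hj.1, pow_one]
    · intro j hj hne
      simp only [Finset.mem_Icc] at hj hne
      rw [if_neg (by omega), pow_zero]

lemma tentHalfBar_succ (Y : ℚ) (m : ℕ) :
    tentHalfBar Y (m+1) = tentHalfBar Y m * ∏ j ∈ Icc ((m+2)/2) m, (Y + j + 1/2) := by
  rw [tentHalfBar, tentHalfBar, Nat.add_sub_cancel]
  have h1 : ∀ j ∈ Icc 1 m, (Y+(j:ℚ)+1/2)^(min j (m+1-j))
      = (Y+(j:ℚ)+1/2)^(min j (m-j)) * (Y+(j:ℚ)+1/2)^(if (m+2)/2 ≤ j then 1 else 0) := by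
    intro j hj
    rw [Finset.mem_Icc] at hj
    rw [← pow_add]
    congr 1
    split_ifs with h <;> omega
  rw [Finset.prod_congr rfl h1, Finset.prod_mul_distrib]
  congr 1
  · symm
    apply Finset.prod_subset (Finset.Icc_subset_Icc_right (by omega))
    intro j hj hne
    have hj' : j = m := by
      simp only [Finset.mem_Icc] at hj hne; omega
    subst hj'
    simp
  · rw [← Finset.prod_subset (Finset.Icc_subset_Icc (by omega) (by omega) :
      Icc ((m+2)/2) m ⊆ Icc 1 m)]
    · apply Finset.prod_congr rfl
      intro j hj
      rw [Finset.mem_Icc] at hj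
      rw [if_pos hj.1, pow_one]
    · intro j hj hne
      simp only [Finset.mem_Icc] at hj hne
      rw [if_neg (by omega), pow_zero]

lemma Bbar_ratio (M n : ℕ) (Y : ℚ) (hY : Y + ((M+1:ℕ):ℚ) + 1 ≠ 0)
    (h2 : ∀ i ∈ Icc 1 n, 2*Y + ((M+1:ℕ):ℚ) + i + 1 ≠ 0) :
    Bbar (M+1+1) n Y = Bbar (M+1) n Y *
      (((2:ℚ)^n)⁻¹ *
       ((Y + ((M+1:ℕ):ℚ) + 1 + n) / (Y + ((M+1:ℕ):ℚ) + 1)) *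
       (∏ j ∈ Icc ((M+1+1)/2+1) (M+1+1), (Y + j)) *
       (∏ j ∈ Icc ((M+1+2)/2) (M+1), (Y + j + 1/2)) *
       (rfac (Y + ((M+1+1:ℕ):ℚ)) n / rfac (Y + ((M+1+1:ℕ):ℚ) + 1/2) n) *
       (∏ i ∈ Icc 1 n,
         ((2*Y + ((M+1:ℕ):ℚ) + i + 1 + ((M+1+i:ℕ):ℚ))
           * (2*Y + ((M+1:ℕ):ℚ) + i + 1 + ((M+1+i:ℕ):ℚ) + 1)
           / (2*Y + ((M+1:ℕ):ℚ) + i + 1)))) := by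
  rw [Bbar, Bbar]
  -- 2-power
  have hpow : ((2:ℚ)^((M+1+1)*n + n*(n+1)/2))⁻¹
      = ((2:ℚ)^((M+1)*n + n*(n+1)/2))⁻¹ * ((2:ℚ)^n)⁻¹ := by
    rw [show (M+1+1)*n = (M+1)*n + n from by ring, Nat.add_right_comm, pow_add, mul_inv]
  -- first rfac
  have hr1 : rfac (Y + ((M+1+1:ℕ):ℚ) + 1) n
      = rfac (Y + ((M+1:ℕ):ℚ) + 1) n * ((Y + ((M+1:ℕ):ℚ) + 1 + n) / (Y + ((M+1:ℕ):ℚ) + 1)) := by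
    rw [show Y + ((M+1+1:ℕ):ℚ) + 1 = (Y + ((M+1:ℕ):ℚ) + 1) + 1 from by push_cast; ring,
      rfac_shift1 _ _ hY]
  -- tents
  have ht1 := tentIntBar_succ Y (M+1)
  have ht2 := tentHalfBar_succ Y (M+1)
  -- middle product
  have hmid : ∏ i ∈ Icc 1 (M+1+1), (rfac (Y + (i:ℚ)) n / rfac (Y + (i:ℚ) + 1/2) n)
      = (∏ i ∈ Icc 1 (M+1), (rfac (Y + (i:ℚ)) n / rfac (Y + (i:ℚ) + 1/2) n))
        * (rfac (Y + ((M+1+1:ℕ):ℚ)) n / rfac (Y + ((M+1+1:ℕ):ℚ) + 1/2) n) := by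
    rw [Finset.prod_Icc_succ_top (by omega)]
  -- last product
  have hlast : ∏ i ∈ Icc 1 n, rfac (2*Y + ((M+1+1:ℕ):ℚ) + i + 1) ((M+1+1) + i)
      = (∏ i ∈ Icc 1 n, rfac (2*Y + ((M+1:ℕ):ℚ) + i + 1) ((M+1) + i))
        * ∏ i ∈ Icc 1 n,
         ((2*Y + ((M+1:ℕ):ℚ) + i + 1 + ((M+1+i:ℕ):ℚ))
           * (2*Y + ((M+1:ℕ):ℚ) + i + 1 + ((M+1+i:ℕ):ℚ) + 1)
           / (2*Y + ((M+1:ℕ):ℚ) + i + 1)) := by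
    rw [← Finset.prod_mul_distrib]
    apply Finset.prod_congr rfl
    intro i hi
    have ha := h2 i hi
    rw [show 2*Y + ((M+1+1:ℕ):ℚ) + i + 1 = (2*Y + ((M+1:ℕ):ℚ) + i + 1) + 1 from by
        push_cast; ring,
      show (M+1+1) + i = ((M+1+i))+1 from by omega,
      rfac_shift2 _ _ ha]
  rw [hpow, hr1, ht1, ht2, hmid, hlast]
  ring

lemma cBar_ratio (l q : ℕ → ℕ) (M n : ℕ) :
    cBarConst l q (M+1+1) n = cBarConst l q (M+1) n *
      ((2:ℚ)^((((M+1+1:ℕ)):ℤ) - n - 1) *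
        ((Nat.factorial (2 * l (M+1+1) - 1) : ℚ))⁻¹ *
        (∏ i ∈ Icc 1 (M+1), ((l (M+1+1) : ℚ) - l i)) /
        (∏ j ∈ Icc 1 n, ((l (M+1+1) : ℚ) + q j))) := by
  rw [cBarConst, cBarConst]
  -- 2-power
  have hpow : (2:ℚ) ^ ((((n:ℤ) - ((M+1+1:ℕ):ℤ)) * ((n:ℤ) - ((M+1+1:ℕ):ℤ) - 1)) / 2
        - ((M+1+1:ℕ):ℤ))
      = (2:ℚ) ^ ((((n:ℤ) - ((M+1:ℕ):ℤ)) * ((n:ℤ) - ((M+1:ℕ):ℤ) - 1)) / 2 - ((M+1:ℕ):ℤ))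
        * (2:ℚ)^((((M+1+1:ℕ)):ℤ) - n - 1) := by
    rw [← zpow_add₀ (show (2:ℚ) ≠ 0 by norm_num)]
    congr 1
    push_cast
    obtain ⟨t, ht⟩ := Int.even_mul_succ_self ((n:ℤ) - ((M:ℤ)+1+1) - 1)
    have e1 : ((n:ℤ) - ((M:ℤ)+1+1)) * ((n:ℤ) - ((M:ℤ)+1+1) - 1) = 2*t := by
      linear_combination ht
    have e2 : ((n:ℤ) - ((M:ℤ)+1)) * ((n:ℤ) - ((M:ℤ)+1) - 1)
        = 2*(t + ((n:ℤ) - ((M:ℤ)+1+1))) := by linear_combination ht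
    rw [e1, e2]
    omega
  -- factorial product
  have hfac : ∏ i ∈ Icc 1 (M+1+1), ((Nat.factorial (2 * l i - 1) : ℚ))⁻¹
      = (∏ i ∈ Icc 1 (M+1), ((Nat.factorial (2 * l i - 1) : ℚ))⁻¹)
        * ((Nat.factorial (2 * l (M+1+1) - 1) : ℚ))⁻¹ := by
    rw [Finset.prod_Icc_succ_top (by omega)]
  -- Vandermonde
  have hV : ∏ i ∈ Icc 1 (M+1+1), ∏ j ∈ Icc (i + 1) (M+1+1), ((l j : ℚ) - l i)
      = (∏ i ∈ Icc 1 (M+1), ∏ j ∈ Icc (i + 1) (M+1), ((l j : ℚ) - l i))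
        * ∏ i ∈ Icc 1 (M+1), ((l (M+1+1) : ℚ) - l i) := by
    rw [Finset.prod_Icc_succ_top (show 1 ≤ M+1+1 by omega)]
    rw [Finset.Icc_eq_empty (show ¬ M+1+1+1 ≤ M+1+1 by omega), Finset.prod_empty, mul_one]
    rw [← Finset.prod_mul_distrib]
    apply Finset.prod_congr rfl
    intro i hi
    rw [Finset.mem_Icc] at hi
    rw [Finset.prod_Icc_succ_top (show i+1 ≤ M+1+1 by omega)]
  -- denominator
  have hden : ∏ i ∈ Icc 1 (M+1+1), ∏ j ∈ Icc 1 n, ((l i : ℚ) + q j)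
      = (∏ i ∈ Icc 1 (M+1), ∏ j ∈ Icc 1 n, ((l i : ℚ) + q j))
        * ∏ j ∈ Icc 1 n, ((l (M+1+1) : ℚ) + q j) := by
    rw [Finset.prod_Icc_succ_top (by omega)]
  rw [hpow, hfac, hV, hden]
  ring

lemma Aratio (l : ℕ → ℕ) (mm : ℕ) (L : ℚ) (g : ℕ → ℚ)
    (hli : ∀ i ∈ Icc 1 (mm+1), i ≤ l i)
    (hnz : ∀ i ∈ Icc 1 mm, L - (l i : ℚ) ≠ 0) :
    ∏ i ∈ Icc 1 (mm+1), ∏ j ∈ Icc i (l i - 1), (L - j) * g j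
      = ((∏ i ∈ Icc 1 mm, ∏ j ∈ Icc i (l i - 1), (L - 1 - j) * g j)
          * ∏ j ∈ Icc (mm+1) (l (mm+1) - 1), (L - j) * g j)
        * ∏ i ∈ Icc 1 mm, ((L - i) / (L - l i)) := by
  rw [Finset.prod_Icc_succ_top (show 1 ≤ mm+1 by omega)]
  have key : ∀ i ∈ Icc 1 mm, ∏ j ∈ Icc i (l i - 1), (L - j) * g j
      = (∏ j ∈ Icc i (l i - 1), (L - 1 - j) * g j) * ((L - i) / (L - l i)) := by
    intro i hi
    rw [Finset.mem_Icc] at hi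
    have hil : i ≤ l i := hli i (by rw [Finset.mem_Icc]; omega)
    have hs := prod_shift (fun j => L - (j:ℚ)) i (l i - 1) hi.1 (by omega)
    rw [show (l i - 1) + 1 = l i by omega] at hs
    have hx : ∏ j ∈ Icc i (l i - 1), (L - 1 - (j:ℚ))
        = ∏ j ∈ Icc i (l i - 1), (L - ((j+1 : ℕ):ℚ)) := by
      apply Finset.prod_congr rfl
      intro j hj
      push_cast; ring
    have hnzi := hnz i (by rw [Finset.mem_Icc]; omega)
    have hXX : ∏ j ∈ Icc i (l i - 1), (L - (j:ℚ))
        = (∏ j ∈ Icc i (l i - 1), (L - 1 - (j:ℚ))) * ((L - i) / (L - l i)) := by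
      rw [hx]
      push_cast at hs ⊢
      field_simp
      first
      | linear_combination hs
      | linear_combination -hs
      | linear_combination (L - (l i : ℚ)) * hs
      | linear_combination -((L - (l i : ℚ)) * hs)
    rw [Finset.prod_mul_distrib, Finset.prod_mul_distrib, hXX]
    ring
  rw [Finset.prod_congr rfl key, Finset.prod_mul_distrib]
  ring

lemma Bqratio (q : ℕ → ℕ) (n : ℕ) (L : ℚ) (g : ℕ → ℚ)
    (hq : ∀ i ∈ Icc 1 n, i ≤ q i)
    (hnz : ∀ i ∈ Icc 1 n, L + (i:ℚ) ≠ 0) :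
    ∏ i ∈ Icc 1 n, ∏ j ∈ Icc i (q i - 1), g j * (L + j + 1)
      = (∏ i ∈ Icc 1 n, ∏ j ∈ Icc i (q i - 1), g j * (L + j))
        * ∏ i ∈ Icc 1 n, ((L + q i) / (L + i)) := by
  have key : ∀ i ∈ Icc 1 n, ∏ j ∈ Icc i (q i - 1), g j * (L + j + 1)
      = (∏ j ∈ Icc i (q i - 1), g j * (L + j)) * ((L + q i) / (L + i)) := by
    intro i hi
    rw [Finset.mem_Icc] at hi
    have hil : i ≤ q i := hq i (by rw [Finset.mem_Icc]; omega)
    have hs := prod_shift (fun j => L + (j:ℚ)) i (q i - 1) hi.1 (by omega)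
    rw [show (q i - 1) + 1 = q i by omega] at hs
    have hx : ∏ j ∈ Icc i (q i - 1), (L + (j:ℚ) + 1)
        = ∏ j ∈ Icc i (q i - 1), (L + ((j+1 : ℕ):ℚ)) := by
      apply Finset.prod_congr rfl
      intro j hj
      push_cast; ring
    have hnzi := hnz i (by rw [Finset.mem_Icc]; omega)
    have hXX : ∏ j ∈ Icc i (q i - 1), (L + (j:ℚ) + 1)
        = (∏ j ∈ Icc i (q i - 1), (L + (j:ℚ))) * ((L + q i) / (L + i)) := by
      rw [hx]
      push_cast at hs ⊢
      field_simp
      first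
      | linear_combination hs
      | linear_combination -hs
      | linear_combination (L + (i : ℚ)) * hs
      | linear_combination -((L + (i : ℚ)) * hs)
    rw [Finset.prod_mul_distrib, Finset.prod_mul_distrib, hXX]
    ring
  rw [Finset.prod_congr rfl key, Finset.prod_mul_distrib]

lemma mono_ge (f : ℕ → ℕ) (m : ℕ) (hpos : ∀ i, 1 ≤ i → i ≤ m → 1 ≤ f i)
    (hmono : ∀ i, 1 ≤ i → i < m → f i < f (i+1)) :
    ∀ i, 1 ≤ i → i ≤ m → i ≤ f i := by
  intro i
  induction i with
  | zero => omega
  | succ i ih =>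
      intro _ hle
      by_cases hc : i = 0
      · subst hc
        exact hpos 1 le_rfl hle
      · have h1 := ih (by omega) (by omega)
        have h2 := hmono i (by omega) (by omega)
        omega

lemma mono_lt (f : ℕ → ℕ) (m : ℕ)
    (hmono : ∀ i, 1 ≤ i → i < m → f i < f (i+1)) :
    ∀ j, 1 ≤ j → j ≤ m → ∀ i, 1 ≤ i → i < j → f i < f j := by
  intro j
  induction j with
  | zero => omega
  | succ j ih =>
      intro h1j hjm i h1i hij
      by_cases hc : i = j
      · subst hc
        exact hmono i h1i (by omega)
      · have ha := ih (by omega) (by omega) i h1i (by omega)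
        have hb := hmono j (by omega) (by omega)
        omega

end PbarAux

open PbarAux Finset in
/-- Fourth equality of Lemma 5.3: for strictly increasing positive lists
`l = (l_1,...,l_m)` with `m ≥ 2` and `q = (q_1,...,q_n)`,
`P̄_{l,q}(0) = P̄_{l^{(m)},q}(l_m - l_{m-1} - 1)`. -/
theorem PbarPoly_boundary_l (m n : ℕ) (l q : ℕ → ℕ) (hm : 2 ≤ m)
    (hlpos : ∀ i, 1 ≤ i → i ≤ m → 1 ≤ l i)
    (hlmono : ∀ i, 1 ≤ i → i < m → l i < l (i + 1))
    (hqpos : ∀ i, 1 ≤ i → i ≤ n → 1 ≤ q i)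
    (hqmono : ∀ i, 1 ≤ i → i < n → q i < q (i + 1)) :
    PbarPoly l q m n 0 = PbarPoly l q (m - 1) n ((l m : ℚ) - l (m - 1) - 1) := by
  obtain ⟨M, rfl⟩ : ∃ M, m = M+1+1 := ⟨m-2, by omega⟩
  simp only [Nat.add_sub_cancel]
  have hl_ge := mono_ge l (M+1+1) hlpos hlmono
  have hl_lt := mono_lt l (M+1+1) hlmono (M+1+1) (by omega) le_rfl
  have hq_ge := mono_ge q n hqpos hqmono
  have hmL : M+1+1 ≤ l (M+1+1) := hl_ge (M+1+1) (by omega) le_rfl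
  have hLcast : ((M:ℚ) + 1 + 1) ≤ (l (M+1+1) : ℚ) := by
    have : ((M+1+1 : ℕ) : ℚ) ≤ (l (M+1+1) : ℚ) := by exact_mod_cast hmL
    push_cast at this
    linarith
  have hMnn : (0:ℚ) ≤ (M:ℚ) := Nat.cast_nonneg M
  have hli : ∀ i ∈ Finset.Icc 1 (M+1+1), i ≤ l i := by
    intro i hi; rw [Finset.mem_Icc] at hi; exact hl_ge i hi.1 hi.2
  have hq2 : ∀ i ∈ Finset.Icc 1 n, i ≤ q i := by
    intro i hi; rw [Finset.mem_Icc] at hi; exact hq_ge i hi.1 hi.2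
  have hnzA : ∀ i ∈ Finset.Icc 1 (M+1), ((l (M+1+1) : ℚ)) - (l i : ℚ) ≠ 0 := by
    intro i hi; rw [Finset.mem_Icc] at hi
    have hlt := hl_lt i (by omega) (by omega)
    exact sub_ne_zero.mpr (by exact_mod_cast (by omega : l (M+1+1) ≠ l i))
  have hnzB : ∀ i ∈ Finset.Icc 1 n, ((l (M+1+1) : ℚ)) + (i : ℚ) ≠ 0 := by
    intro i hi
    have hnn : (0:ℚ) ≤ (i:ℚ) := Nat.cast_nonneg i
    intro hcon; linarith
  have hY : ((l (M+1+1):ℚ) - ((M+1+1:ℕ):ℚ)) + ((M+1:ℕ):ℚ) + 1 ≠ 0 := by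
    intro hcon; push_cast at hcon; linarith
  have h2' : ∀ i ∈ Finset.Icc 1 n,
      2*((l (M+1+1):ℚ) - ((M+1+1:ℕ):ℚ)) + ((M+1:ℕ):ℚ) + (i:ℚ) + 1 ≠ 0 := by
    intro i hi
    have hnn : (0:ℚ) ≤ (i:ℚ) := Nat.cast_nonneg i
    intro hcon; push_cast at hcon; linarith
  rw [PbarPoly, PbarPoly]
  simp only [zero_add]
  rw [show ((l (M+1+1):ℚ) - (l (M+1):ℚ) - 1 + (l (M+1):ℚ) - ((M+1:ℕ):ℚ))
      = (l (M+1+1):ℚ) - ((M+1+1:ℕ):ℚ) from by push_cast; ring]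
  have hA2 : ∏ i ∈ Finset.Icc 1 (M+1), ∏ j ∈ Finset.Icc i (l i - 1),
        ((l (M+1+1):ℚ) - (l (M+1):ℚ) - 1 + (l (M+1):ℚ) - (j:ℚ)) *
          ((l (M+1+1):ℚ) - ((M+1+1:ℕ):ℚ) + (n:ℚ) + (j:ℚ) + 1)
      = ∏ i ∈ Finset.Icc 1 (M+1), ∏ j ∈ Finset.Icc i (l i - 1),
        ((l (M+1+1):ℚ) - 1 - (j:ℚ)) *
          ((l (M+1+1):ℚ) - ((M+1+1:ℕ):ℚ) + (n:ℚ) + (j:ℚ) + 1) := by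
    refine Finset.prod_congr rfl fun i _ => Finset.prod_congr rfl fun j _ => ?_
    push_cast; ring
  have hB2 : ∏ i ∈ Finset.Icc 1 n, ∏ j ∈ Finset.Icc i (q i - 1),
        ((l (M+1+1):ℚ) - ((M+1+1:ℕ):ℚ) + (n:ℚ) - (j:ℚ)) *
          ((l (M+1+1):ℚ) - (l (M+1):ℚ) - 1 + (l (M+1):ℚ) + (j:ℚ) + 1)
      = ∏ i ∈ Finset.Icc 1 n, ∏ j ∈ Finset.Icc i (q i - 1),
        ((l (M+1+1):ℚ) - ((M+1+1:ℕ):ℚ) + (n:ℚ) - (j:ℚ)) * ((l (M+1+1):ℚ) + (j:ℚ)) := by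
    refine Finset.prod_congr rfl fun i _ => Finset.prod_congr rfl fun j _ => ?_
    push_cast; ring
  rw [hA2, hB2]
  have hAr := Aratio l (M+1) ((l (M+1+1):ℚ))
    (fun j => (l (M+1+1):ℚ) - ((M+1+1:ℕ):ℚ) + (n:ℚ) + (j:ℚ) + 1) hli hnzA
  rw [hAr]
  have hBr := Bqratio q n ((l (M+1+1):ℚ))
    (fun j => (l (M+1+1):ℚ) - ((M+1+1:ℕ):ℚ) + (n:ℚ) - (j:ℚ)) hq2 hnzB
  rw [hBr]
  rw [Bbar_ratio M n ((l (M+1+1):ℚ) - ((M+1+1:ℕ):ℚ)) hY h2']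
  rw [cBar_ratio l q M n]
  -- normalize the Bbar-ratio pieces
  rw [show ((l (M+1+1):ℚ) - ((M+1+1:ℕ):ℚ) + ((M+1:ℕ):ℚ) + 1 + (n:ℚ))
        / ((l (M+1+1):ℚ) - ((M+1+1:ℕ):ℚ) + ((M+1:ℕ):ℚ) + 1)
      = ((l (M+1+1):ℚ) + (n:ℚ)) / (l (M+1+1):ℚ) from by push_cast; ring]
  rw [show (l (M+1+1):ℚ) - ((M+1+1:ℕ):ℚ) + ((M+1+1:ℕ):ℚ) = (l (M+1+1):ℚ) from by ring]
  have r4 : ∏ i ∈ Finset.Icc 1 n,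
        (2 * ((l (M+1+1):ℚ) - ((M+1+1:ℕ):ℚ)) + ((M+1:ℕ):ℚ) + (i:ℚ) + 1 + ((M+1+i:ℕ):ℚ)) *
            (2 * ((l (M+1+1):ℚ) - ((M+1+1:ℕ):ℚ)) + ((M+1:ℕ):ℚ) + (i:ℚ) + 1 + ((M+1+i:ℕ):ℚ) + 1) /
          (2 * ((l (M+1+1):ℚ) - ((M+1+1:ℕ):ℚ)) + ((M+1:ℕ):ℚ) + (i:ℚ) + 1)
      = ∏ i ∈ Finset.Icc 1 n,
        (2*(l (M+1+1):ℚ) + 2*(i:ℚ) - 1) * (2*(l (M+1+1):ℚ) + 2*(i:ℚ))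
          / (2*(l (M+1+1):ℚ) - ((M+1+1:ℕ):ℚ) + (i:ℚ)) := by
    refine Finset.prod_congr rfl fun i _ => ?_
    push_cast; ring
  rw [r4]
  -- the scalar identity
  have K := Kident (M+1+1) n (l (M+1+1)) (by omega) hmL
  rw [show M+1+1+1 = M+1+2 by omega, show M+1+1-1 = M+1 by omega] at K
  have c1 : (∏ i ∈ Finset.Icc 1 (M+1), ((l (M+1+1):ℚ) - (l i : ℚ))) *
        (∏ i ∈ Finset.Icc 1 (M+1), ((l (M+1+1):ℚ) - (i:ℚ)) / ((l (M+1+1):ℚ) - (l i:ℚ)))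
      = ∏ i ∈ Finset.Icc 1 (M+1), ((l (M+1+1):ℚ) - (i:ℚ)) := by
    rw [← Finset.prod_mul_distrib]
    refine Finset.prod_congr rfl fun i hi => ?_
    have h := hnzA i hi
    field_simp
  have c2 : (∏ j ∈ Finset.Icc 1 n, ((l (M+1+1):ℚ) + (q j:ℚ)))⁻¹ *
        (∏ i ∈ Finset.Icc 1 n, ((l (M+1+1):ℚ) + (q i:ℚ)) / ((l (M+1+1):ℚ) + (i:ℚ)))
      = ∏ i ∈ Finset.Icc 1 n, ((l (M+1+1):ℚ) + (i:ℚ))⁻¹ := by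
    rw [← Finset.prod_inv_distrib, ← Finset.prod_mul_distrib]
    refine Finset.prod_congr rfl fun i hi => ?_
    have h1 := hnzB i hi
    have h2 : ((l (M+1+1):ℚ)) + (q i : ℚ) ≠ 0 := by
      have hnn : (0:ℚ) ≤ (q i : ℚ) := Nat.cast_nonneg _
      intro hcon; linarith
    field_simp
  have hKfull : (2 ^ (((M+1+1:ℕ):ℤ) - (n:ℤ) - 1) *
        ((Nat.factorial (2 * l (M+1+1) - 1) : ℚ))⁻¹ *
        (∏ i ∈ Finset.Icc 1 (M+1), ((l (M+1+1):ℚ) - (l i : ℚ))) /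
        (∏ j ∈ Finset.Icc 1 n, ((l (M+1+1):ℚ) + (q j:ℚ)))) *
      (((2:ℚ)^n)⁻¹ * (((l (M+1+1):ℚ) + (n:ℚ)) / (l (M+1+1):ℚ)) *
        (∏ j ∈ Finset.Icc ((M+1+1)/2+1) (M+1+1), ((l (M+1+1):ℚ) - ((M+1+1:ℕ):ℚ) + (j:ℚ))) *
        (∏ j ∈ Finset.Icc ((M+1+2)/2) (M+1),
          ((l (M+1+1):ℚ) - ((M+1+1:ℕ):ℚ) + (j:ℚ) + 1/2)) *
        (rfac ((l (M+1+1):ℚ)) n / rfac ((l (M+1+1):ℚ) + 1/2) n) *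
        (∏ i ∈ Finset.Icc 1 n,
          (2*(l (M+1+1):ℚ) + 2*(i:ℚ) - 1) * (2*(l (M+1+1):ℚ) + 2*(i:ℚ))
            / (2*(l (M+1+1):ℚ) - ((M+1+1:ℕ):ℚ) + (i:ℚ)))) *
      (∏ x ∈ Finset.Icc (M+1+1) (l (M+1+1) - 1),
        ((l (M+1+1):ℚ) - (x:ℚ)) * ((l (M+1+1):ℚ) - ((M+1+1:ℕ):ℚ) + (n:ℚ) + (x:ℚ) + 1)) *
      (∏ i ∈ Finset.Icc 1 (M+1), ((l (M+1+1):ℚ) - (i:ℚ)) / ((l (M+1+1):ℚ) - (l i:ℚ))) *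
      (∏ i ∈ Finset.Icc 1 n, ((l (M+1+1):ℚ) + (q i:ℚ)) / ((l (M+1+1):ℚ) + (i:ℚ))) = 1 := by
    calc _ = ((2:ℚ) ^ (((M+1+1:ℕ):ℤ) - (n:ℤ) - 1) *
        ((Nat.factorial (2 * l (M+1+1) - 1) : ℚ))⁻¹ *
        (((2:ℚ)^n)⁻¹ * (((l (M+1+1):ℚ) + (n:ℚ)) / (l (M+1+1):ℚ)) *
        (∏ j ∈ Finset.Icc ((M+1+1)/2+1) (M+1+1), ((l (M+1+1):ℚ) - ((M+1+1:ℕ):ℚ) + (j:ℚ))) *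
        (∏ j ∈ Finset.Icc ((M+1+2)/2) (M+1),
          ((l (M+1+1):ℚ) - ((M+1+1:ℕ):ℚ) + (j:ℚ) + 1/2)) *
        (rfac ((l (M+1+1):ℚ)) n / rfac ((l (M+1+1):ℚ) + 1/2) n) *
        (∏ i ∈ Finset.Icc 1 n,
          (2*(l (M+1+1):ℚ) + 2*(i:ℚ) - 1) * (2*(l (M+1+1):ℚ) + 2*(i:ℚ))
            / (2*(l (M+1+1):ℚ) - ((M+1+1:ℕ):ℚ) + (i:ℚ)))) *
        (∏ x ∈ Finset.Icc (M+1+1) (l (M+1+1) - 1),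
          ((l (M+1+1):ℚ) - (x:ℚ)) * ((l (M+1+1):ℚ) - ((M+1+1:ℕ):ℚ) + (n:ℚ) + (x:ℚ) + 1))) *
        (((∏ i ∈ Finset.Icc 1 (M+1), ((l (M+1+1):ℚ) - (l i : ℚ))) *
          (∏ i ∈ Finset.Icc 1 (M+1), ((l (M+1+1):ℚ) - (i:ℚ)) / ((l (M+1+1):ℚ) - (l i:ℚ)))) *
         ((∏ j ∈ Finset.Icc 1 n, ((l (M+1+1):ℚ) + (q j:ℚ)))⁻¹ *
          (∏ i ∈ Finset.Icc 1 n, ((l (M+1+1):ℚ) + (q i:ℚ)) / ((l (M+1+1):ℚ) + (i:ℚ))))) := by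
          ring
    _ = 1 := by
          rw [c1, c2]
          linear_combination K
  linear_combination (cBarConst l q (M+1) n *
      Bbar (M+1) n ((l (M+1+1):ℚ) - ((M+1+1:ℕ):ℚ)) *
      (∏ i ∈ Finset.Icc 1 (M+1), ∏ j ∈ Finset.Icc i (l i - 1),
        ((l (M+1+1):ℚ) - 1 - (j:ℚ)) * ((l (M+1+1):ℚ) - ((M+1+1:ℕ):ℚ) + (n:ℚ) + (j:ℚ) + 1)) *
      (∏ i ∈ Finset.Icc 1 n, ∏ j ∈ Finset.Icc i (q i - 1),
        ((l (M+1+1):ℚ) - ((M+1+1:ℕ):ℚ) + (n:ℚ) - (j:ℚ)) * ((l (M+1+1):ℚ) + (j:ℚ)))) * hKfull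
end
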